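/- arXiv:1401.7759 — 10 statements merged into one kernel-verified Lean document; each statement's English description precedes it below -/
import Mathlib

section
/- Let K be a field of characteristic zero, let I be an ideal of R = K[x₁,…,xₙ], let b ≥ 1 be an integer and let p ∈ Kⁿ. Then Δ^{b−1}(I) ⊆ m_p if and only if I ⊆ m_p^b. (Hence the singular locus of the ideal-type singularity (I,b), defined as the zero set of Δ^{b−1}(I), is exactly the set of points at which the order of I is at least b.) -/
/-!
Differentiation lowers the order at `p` by at most one (Leibniz rule). Conversely, in
characteristic zero, `f` has order `≥ c + 1` at `p` as soon as `f(p) = 0` and every `∂ᵢ f` has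
order `≥ c`: after translating `p` to the origin, a monomial `x^α` of `f` with `αᵢ ≠ 0` reappears
in `∂ᵢ f` as `αᵢ x^(α - eᵢ)`. Hence `Δ(I) ⊆ m_p^(c+1)` iff `I ⊆ m_p^(c+2)`, and induction on
`b` removes one `Δ` at a time.
-/

/-- The maximal ideal `m_p` of polynomials vanishing at the point `p ∈ Kⁿ`. -/
noncomputable def vanishingIdeal {K : Type*} [Field K] {n : ℕ} (p : Fin n → K) :
    Ideal (MvPolynomial (Fin n) K) :=
  RingHom.ker (MvPolynomial.eval p)

/-- The operator `Δ`: the ideal generated by `I` together with all first order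
partial derivatives of elements of `I`. -/
noncomputable def deltaOp {K : Type*} [Field K] {n : ℕ}
    (I : Ideal (MvPolynomial (Fin n) K)) : Ideal (MvPolynomial (Fin n) K) :=
  I ⊔ Ideal.span {g | ∃ f ∈ I, ∃ i : Fin n, g = MvPolynomial.pderiv i f}

theorem Derivation.map_mem_pow_of_mem_pow_succ {R A : Type*} [CommSemiring R]
    [CommSemiring A] [Algebra R A] (D : Derivation R A A) (J : Ideal A) {c : ℕ} {f : A}
    (hf : f ∈ J ^ (c + 1)) : D f ∈ J ^ c := by
  induction c generalizing f with
  | zero => simp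
  | succ c ih =>
    rw [pow_succ] at hf
    refine Submodule.mul_induction_on hf (fun g hg h hh => ?_)
      (fun _ _ => by rw [map_add]; exact add_mem)
    rw [D.leibniz, smul_eq_mul, smul_eq_mul, pow_succ]
    exact add_mem (Ideal.mul_mem_right _ _ hg) (mul_comm (D g) h ▸ Ideal.mul_mem_mul (ih hg) hh)

namespace MvPolynomial

variable {σ R : Type*} [CommRing R]

theorem ker_eval_zero : RingHom.ker (eval (0 : σ → R)) = idealOfVars σ R := by
  ext f
  rw [RingHom.mem_ker, eval_zero, constantCoeff_eq, ← pow_one (idealOfVars σ R),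
    mem_pow_idealOfVars_iff']
  simp [Finsupp.degree_eq_zero_iff]

theorem mem_pow_succ_idealOfVars_iff [IsDomain R] [CharZero R] {c : ℕ} {f : MvPolynomial σ R} :
    f ∈ idealOfVars σ R ^ (c + 1) ↔
      constantCoeff f = 0 ∧ ∀ i, pderiv i f ∈ idealOfVars σ R ^ c := by
  refine ⟨fun hf => ⟨?_, fun i => (pderiv i).map_mem_pow_of_mem_pow_succ _ hf⟩, ?_⟩
  · rw [← eval_zero, ← RingHom.mem_ker, ker_eval_zero]
    exact Ideal.pow_le_self c.succ_ne_zero hf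
  rintro ⟨h0, hderiv⟩
  rw [mem_pow_idealOfVars_iff]
  intro α hα
  obtain ⟨i, hi⟩ : ∃ i, α i ≠ 0 := by
    by_contra! h
    rw [show α = 0 from Finsupp.ext h, mem_support_iff, ← constantCoeff_eq] at hα
    exact hα h0
  have hα_eq : α - Finsupp.single i 1 + Finsupp.single i 1 = α :=
    tsub_add_cancel_of_le (Finsupp.single_le_iff.2 (Nat.one_le_iff_ne_zero.2 hi))
  have hcoeff : coeff (α - Finsupp.single i 1) (pderiv i f) ≠ 0 := by
    rw [coeff_pderiv, hα_eq]
    exact mul_ne_zero (mem_support_iff.1 hα) (Nat.cast_add_one_ne_zero _)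
  have hdeg := (mem_pow_idealOfVars_iff c _).1 (hderiv i) _ (mem_support_iff.2 hcoeff)
  rw [← hα_eq, map_add, Finsupp.degree_single]
  omega

noncomputable def translate (p : σ → R) : MvPolynomial σ R ≃ₐ[R] MvPolynomial σ R :=
  AlgEquiv.ofAlgHom (aeval fun i => X i + C (p i)) (aeval fun i => X i - C (p i))
    (by ext; simp) (by ext; simp)

theorem translate_apply (p : σ → R) (f : MvPolynomial σ R) :
    translate p f = aeval (fun i => X i + C (p i)) f := rfl

theorem eval_zero_translate (p : σ → R) (f : MvPolynomial σ R) :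
    eval 0 (translate p f) = eval p f := by
  change aeval 0 (bind₁ (fun i => X i + C (p i)) f) = _
  rw [aeval_bind₁]
  simp

theorem pderiv_translate (p : σ → R) (i : σ) (f : MvPolynomial σ R) :
    pderiv i (translate p f) = translate p (pderiv i f) := by
  classical
  induction f using MvPolynomial.induction_on with
  | C a => simp [translate_apply]
  | add f g hf hg => simp only [map_add, hf, hg]
  | mul_X f j hf =>
    simp only [map_mul, pderiv_mul, map_add, hf]
    simp [translate_apply, pderiv_X, Pi.single_apply]

theorem mem_ker_eval_pow_iff (p : σ → R) (c : ℕ) (f : MvPolynomial σ R) :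
    f ∈ RingHom.ker (eval p) ^ c ↔ translate p f ∈ idealOfVars σ R ^ c := by
  let e := (translate p).toRingEquiv
  have hker : RingHom.ker (eval p) = (idealOfVars σ R).map e.symm := by
    ext g
    rw [Ideal.map_symm, Ideal.mem_comap, ← ker_eval_zero, RingHom.mem_ker, RingHom.mem_ker]
    change _ ↔ eval 0 (translate p g) = 0
    rw [eval_zero_translate]
  rw [hker, ← Ideal.map_pow, Ideal.map_symm]
  rfl

theorem mem_ker_eval_pow_succ_iff [IsDomain R] [CharZero R] (p : σ → R) {c : ℕ}
    {f : MvPolynomial σ R} :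
    f ∈ RingHom.ker (eval p) ^ (c + 1) ↔
      eval p f = 0 ∧ ∀ i, pderiv i f ∈ RingHom.ker (eval p) ^ c := by
  rw [mem_ker_eval_pow_iff, mem_pow_succ_idealOfVars_iff, ← eval_zero, eval_zero_translate]
  simp only [mem_ker_eval_pow_iff, pderiv_translate]

end MvPolynomial

section deltaOp

open MvPolynomial

variable {K : Type*} [Field K] {n : ℕ}

theorem deltaOp_le_iff {I J : Ideal (MvPolynomial (Fin n) K)} :
    deltaOp I ≤ J ↔ I ≤ J ∧ ∀ f ∈ I, ∀ i, pderiv i f ∈ J := by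
  simp only [deltaOp, sup_le_iff, Ideal.span_le]
  refine and_congr_right fun _ => ⟨fun h f hf i => h ⟨f, hf, i, rfl⟩, ?_⟩
  rintro h _ ⟨f, hf, i, rfl⟩
  exact h f hf i

theorem deltaOp_le_vanishingIdeal_pow_iff [CharZero K] {I : Ideal (MvPolynomial (Fin n) K)}
    {p : Fin n → K} {c : ℕ} :
    deltaOp I ≤ vanishingIdeal p ^ (c + 1) ↔ I ≤ vanishingIdeal p ^ (c + 2) := by
  rw [deltaOp_le_iff]
  constructor
  · rintro ⟨hI, hderiv⟩ f hf
    exact (mem_ker_eval_pow_succ_iff p).2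
      ⟨Ideal.pow_le_self c.succ_ne_zero (hI hf), hderiv f hf⟩
  · intro hI
    exact ⟨hI.trans (Ideal.pow_le_pow_right (by omega)),
      fun f hf => ((mem_ker_eval_pow_succ_iff p).1 (hI hf)).2⟩

theorem iterate_deltaOp_le_vanishingIdeal_iff [CharZero K] (p : Fin n → K) (a : ℕ)
    (I : Ideal (MvPolynomial (Fin n) K)) :
    deltaOp^[a] I ≤ vanishingIdeal p ↔ I ≤ vanishingIdeal p ^ (a + 1) := by
  induction a generalizing I with
  | zero => simp
  | succ a ih => rw [Function.iterate_succ_apply, ih, deltaOp_le_vanishingIdeal_pow_iff]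

end deltaOp

/-- For a field `K` of characteristic zero, an ideal `I` of
`K[x₁,…,xₙ]`, an integer `b ≥ 1` and a point `p ∈ Kⁿ`, one has
`Δ^{b−1}(I) ⊆ m_p` if and only if `I ⊆ m_p^b`. -/
theorem stmt_0 {K : Type*} [Field K] [CharZero K] {n : ℕ}
    (I : Ideal (MvPolynomial (Fin n) K)) (b : ℕ) (hb : 1 ≤ b) (p : Fin n → K) :
    deltaOp^[b - 1] I ≤ vanishingIdeal p ↔ I ≤ vanishingIdeal p ^ b := by
  obtain ⟨a, rfl⟩ := Nat.exists_eq_add_of_le' hb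
  simpa using iterate_deltaOp_le_vanishingIdeal_iff p a I
end

section
/- Let K be a field and I, J ideals of R = K[x₁,…,xₙ]. Then Δ(I + J) = Δ(I) + Δ(J), and hence Δ^k(I+J) = Δ^k(I) + Δ^k(J) for all k ≥ 0; consequently (for K of characteristic zero) the singular locus of the sum singularity (I+J, b) is the intersection of the singular loci of (I,b) and (J,b). Moreover, if I, J ⊆ ⟨x₁,…,x_m⟩^b, then in each blowup chart φ_k (1 ≤ k ≤ m) the controlled transform of (I+J, b) equals the sum of the controlled transforms of (I,b) and (J,b). -/
/-- The ideal `⟨x₁,…,x_m⟩` of the blowup center `V(x₁,…,x_m)` (indices `0,…,m-1`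
in the 0-based indexing of `Fin n`). -/
noncomputable def centerIdeal (K : Type*) [Field K] (n m : ℕ) :
    Ideal (MvPolynomial (Fin n) K) :=
  Ideal.span {f | ∃ i : Fin n, i.val < m ∧ f = MvPolynomial.X i}

/-- The `k`-th affine chart `φ_k` of the blowup of `𝔸ⁿ` along `V(x₁,…,x_m)`:
the `K`-algebra map sending `xᵢ ↦ x_k·xᵢ` for `i < m`, `i ≠ k`, and fixing the
other variables. -/
noncomputable def blowupChart {K : Type*} [Field K] {n : ℕ} (m : ℕ) (k : Fin n) :
    MvPolynomial (Fin n) K →ₐ[K] MvPolynomial (Fin n) K :=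
  MvPolynomial.aeval (fun i : Fin n =>
    if i.val < m ∧ i ≠ k then MvPolynomial.X k * MvPolynomial.X i else MvPolynomial.X i)

/-- The controlled transform of `(I,b)` in the chart `φ_k`: the ideal generated by
all `g` with `x_k^b·g = φ_k(f)` for some `f ∈ I`. -/
noncomputable def controlledTransform {K : Type*} [Field K] {n : ℕ} (m : ℕ) (k : Fin n)
    (b : ℕ) (I : Ideal (MvPolynomial (Fin n) K)) : Ideal (MvPolynomial (Fin n) K) :=
  Ideal.span {g | ∃ f ∈ I, MvPolynomial.X k ^ b * g = blowupChart m k f}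

open MvPolynomial in
lemma deltaOp_mono {K : Type*} [Field K] {n : ℕ} {I J : Ideal (MvPolynomial (Fin n) K)}
    (h : I ≤ J) : deltaOp I ≤ deltaOp J := by
  refine sup_le_sup h (Ideal.span_mono ?_)
  rintro g ⟨f, hf, i, rfl⟩
  exact ⟨f, h hf, i, rfl⟩

open MvPolynomial in
lemma deltaOp_sup {K : Type*} [Field K] {n : ℕ} (I J : Ideal (MvPolynomial (Fin n) K)) :
    deltaOp (I ⊔ J) = deltaOp I ⊔ deltaOp J := by
  apply le_antisymm
  · apply sup_le
    · exact sup_le_sup le_sup_left le_sup_left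
    · rw [Ideal.span_le]
      rintro g ⟨f, hf, i, rfl⟩
      obtain ⟨a, ha, c, hc, rfl⟩ := Submodule.mem_sup.mp hf
      rw [map_add]
      exact Submodule.add_mem_sup
        (Submodule.mem_sup_right (Ideal.subset_span ⟨a, ha, i, rfl⟩))
        (Submodule.mem_sup_right (Ideal.subset_span ⟨c, hc, i, rfl⟩))
  · exact sup_le (deltaOp_mono le_sup_left) (deltaOp_mono le_sup_right)

open MvPolynomial in
lemma chart_dvd {K : Type*} [Field K] {n m : ℕ} {k : Fin n} {b : ℕ}
    {a : MvPolynomial (Fin n) K} (ha : a ∈ centerIdeal K n m ^ b) :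
    X k ^ b ∣ blowupChart m k a := by
  have hmap : Ideal.map (blowupChart m k (K := K)).toRingHom (centerIdeal K n m) ≤
      Ideal.span {X k} := by
    rw [centerIdeal, Ideal.map_span, Ideal.span_le]
    rintro g ⟨f, ⟨i, him, rfl⟩, rfl⟩
    rcases eq_or_ne i k with rfl | hik
    · simp only [AlgHom.toRingHom_eq_coe, RingHom.coe_coe, blowupChart, aeval_X]
      rw [if_neg (by simp)]
      exact Ideal.subset_span rfl
    · simp only [AlgHom.toRingHom_eq_coe, RingHom.coe_coe, blowupChart, aeval_X]
      rw [if_pos ⟨him, hik⟩]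
      exact Ideal.mem_span_singleton.mpr ⟨X i, rfl⟩
  have h1 : blowupChart m k a ∈ Ideal.map (blowupChart m k (K := K)).toRingHom
      (centerIdeal K n m ^ b) := Ideal.mem_map_of_mem _ ha
  rw [Ideal.map_pow] at h1
  have h2 := Ideal.pow_right_mono hmap b h1
  rw [Ideal.span_singleton_pow, Ideal.mem_span_singleton] at h2
  exact h2

open MvPolynomial in
lemma ct_mono {K : Type*} [Field K] {n : ℕ} {m : ℕ} {k : Fin n} {b : ℕ}
    {I J : Ideal (MvPolynomial (Fin n) K)} (h : I ≤ J) :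
    controlledTransform m k b I ≤ controlledTransform m k b J := by
  refine Ideal.span_mono ?_
  rintro g ⟨f, hf, hg⟩
  exact ⟨f, h hf, hg⟩

/-- `Δ(I+J) = Δ(I)+Δ(J)`, hence `Δ^k(I+J) = Δ^k(I)+Δ^k(J)` for all
`k ≥ 0`; consequently (in characteristic zero) the singular locus of `(I+J,b)` is the
intersection of the singular loci of `(I,b)` and `(J,b)`; moreover, if
`I, J ⊆ ⟨x₁,…,x_m⟩^b`, then in each blowup chart the controlled transform of `(I+J,b)`
is the sum of the controlled transforms of `(I,b)` and `(J,b)`. -/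
theorem stmt_2 {K : Type*} [Field K] {n : ℕ} (I J : Ideal (MvPolynomial (Fin n) K)) :
    deltaOp (I ⊔ J) = deltaOp I ⊔ deltaOp J ∧
    (∀ k : ℕ, deltaOp^[k] (I ⊔ J) = deltaOp^[k] I ⊔ deltaOp^[k] J) ∧
    (∀ (_ : CharZero K) (b : ℕ), 1 ≤ b →
      {p : Fin n → K | deltaOp^[b - 1] (I ⊔ J) ≤ vanishingIdeal p} =
        {p : Fin n → K | deltaOp^[b - 1] I ≤ vanishingIdeal p} ∩
        {p : Fin n → K | deltaOp^[b - 1] J ≤ vanishingIdeal p}) ∧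
    (∀ (m : ℕ) (k : Fin n) (b : ℕ), m ≤ n → k.val < m →
      I ≤ centerIdeal K n m ^ b → J ≤ centerIdeal K n m ^ b →
      controlledTransform m k b (I ⊔ J) =
        controlledTransform m k b I ⊔ controlledTransform m k b J) := by
  have hsup : ∀ k : ℕ, deltaOp^[k] (I ⊔ J) = deltaOp^[k] I ⊔ deltaOp^[k] J := by
    intro k
    induction k with
    | zero => simp
    | succ k ih =>
      simp only [Function.iterate_succ_apply', ih, deltaOp_sup]
  refine ⟨deltaOp_sup I J, hsup, ?_, ?_⟩
  · intro _ b _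
    ext p
    simp [hsup (b - 1), sup_le_iff]
  · intro m k b _ _ hI hJ
    apply le_antisymm
    · rw [controlledTransform, Ideal.span_le]
      rintro g ⟨f, hf, hg⟩
      obtain ⟨a, ha, c, hc, rfl⟩ := Submodule.mem_sup.mp hf
      obtain ⟨g₁, hg₁⟩ := chart_dvd (hI ha)
      have hg₂ : MvPolynomial.X k ^ b * (g - g₁) = blowupChart m k c := by
        rw [map_add] at hg
        rw [mul_sub, hg, ← hg₁]
        ring
      have hgeq : g = g₁ + (g - g₁) := by ring
      rw [hgeq]
      exact Submodule.add_mem_sup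
        (Ideal.subset_span ⟨a, ha, hg₁.symm⟩)
        (Ideal.subset_span ⟨c, hc, hg₂⟩)
    · exact sup_le (ct_mono le_sup_left) (ct_mono le_sup_right)
end

section
/- Let K be a field, p ∈ Kⁿ, and let I, J be nonzero ideals of R = K[x₁,…,xₙ]. Then ord_p(I·J) = ord_p(I) + ord_p(J). Equivalently, for nonzero polynomials f, g: if f ∉ m_p^{a+1} and g ∉ m_p^{c+1}, then f·g ∉ m_p^{a+c+1}. -/
/-- `ord_p(I)`: the largest `m` with `I ⊆ m_p^m` (for a nonzero ideal `I`). -/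
noncomputable def ordIdeal {K : Type*} [Field K] {n : ℕ} (p : Fin n → K)
    (I : Ideal (MvPolynomial (Fin n) K)) : ℕ :=
  sSup {m : ℕ | I ≤ vanishingIdeal p ^ m}

namespace MvPolynomial

section CommSemiring

variable {σ R : Type*} [CommSemiring R]

theorem mem_pow_idealOfVars_iff_le_order (k : ℕ) (f : MvPolynomial σ R) :
    f ∈ idealOfVars σ R ^ k ↔ (k : ℕ∞) ≤ (f : MvPowerSeries σ R).order := by
  rw [mem_pow_idealOfVars_iff']
  refine ⟨fun h => MvPowerSeries.nat_le_order fun d hd => by rw [coeff_coe, h d hd],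
    fun h d hd => ?_⟩
  rw [← coeff_coe]
  exact MvPowerSeries.coeff_of_lt_order (lt_of_lt_of_le (by exact_mod_cast hd) h)

theorem mem_idealOfVars_iff (f : MvPolynomial σ R) :
    f ∈ idealOfVars σ R ↔ constantCoeff f = 0 := by
  simpa [Finsupp.degree_eq_zero_iff, constantCoeff_eq] using mem_pow_idealOfVars_iff' 1 f

end CommSemiring

section CommRing

variable {σ R : Type*} [CommRing R]

noncomputable def translation (p : σ → R) : MvPolynomial σ R ≃ₐ[R] MvPolynomial σ R :=
  AlgEquiv.ofAlgHom (aeval fun i => X i + C (p i)) (aeval fun i => X i - C (p i))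
    (by ext i : 1; simp) (by ext i : 1; simp)

theorem constantCoeff_translation (p : σ → R) (f : MvPolynomial σ R) :
    constantCoeff (translation p f) = eval p f := by
  show (constantCoeff.comp (translation p : MvPolynomial σ R →+* MvPolynomial σ R)) f = _
  congr 1
  ext <;> simp [translation]

/-- `ord_p(f)`: the order at the origin of `f` after moving `p` to the origin (`⊤` for
`f = 0`). -/
noncomputable def orderAt (p : σ → R) (f : MvPolynomial σ R) : ℕ∞ :=
  (translation p f : MvPowerSeries σ R).order

theorem orderAt_eq_top_iff (p : σ → R) (f : MvPolynomial σ R) :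
    orderAt p f = ⊤ ↔ f = 0 := by
  rw [orderAt, MvPowerSeries.order_eq_top_iff, coe_eq_zero_iff,
    map_eq_zero_iff _ (translation p).injective]

theorem orderAt_mul [NoZeroDivisors R] (p : σ → R) (f g : MvPolynomial σ R) :
    orderAt p (f * g) = orderAt p f + orderAt p g := by
  rw [orderAt, map_mul, coe_mul, MvPowerSeries.order_mul, orderAt, orderAt]

end CommRing

end MvPolynomial

section VanishingIdeal

open MvPolynomial (idealOfVars translation orderAt)

variable {K : Type*} [Field K] {n : ℕ}

theorem vanishingIdeal_eq_comap_idealOfVars (p : Fin n → K) :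
    vanishingIdeal p = (idealOfVars (Fin n) K).comap (translation p).toRingEquiv := by
  ext f
  simp [vanishingIdeal, MvPolynomial.mem_idealOfVars_iff, MvPolynomial.constantCoeff_translation]

theorem mem_vanishingIdeal_pow_iff (p : Fin n → K) (k : ℕ) (f : MvPolynomial (Fin n) K) :
    f ∈ vanishingIdeal p ^ k ↔ translation p f ∈ idealOfVars (Fin n) K ^ k := by
  rw [vanishingIdeal_eq_comap_idealOfVars, ← Ideal.map_symm, ← Ideal.map_pow, Ideal.map_symm,
    Ideal.mem_comap]
  rfl

theorem mem_vanishingIdeal_pow_iff_le_orderAt (p : Fin n → K) (k : ℕ)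
    (f : MvPolynomial (Fin n) K) :
    f ∈ vanishingIdeal p ^ k ↔ (k : ℕ∞) ≤ orderAt p f := by
  rw [mem_vanishingIdeal_pow_iff, MvPolynomial.mem_pow_idealOfVars_iff_le_order]
  rfl

theorem mul_notMem_vanishingIdeal_pow (p : Fin n → K) {f g : MvPolynomial (Fin n) K} {a c : ℕ}
    (hf : f ∉ vanishingIdeal p ^ (a + 1)) (hg : g ∉ vanishingIdeal p ^ (c + 1)) :
    f * g ∉ vanishingIdeal p ^ (a + c + 1) := by
  simp only [mem_vanishingIdeal_pow_iff_le_orderAt, not_le, MvPolynomial.orderAt_mul] at hf hg ⊢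
  push_cast at hf hg ⊢
  rw [ENat.lt_add_one_iff (by simp)] at hf hg ⊢
  exact add_le_add hf hg

theorem exists_notMem_vanishingIdeal_pow (p : Fin n → K) {f : MvPolynomial (Fin n) K}
    (hf : f ≠ 0) :
    ∃ N, f ∉ vanishingIdeal p ^ N := by
  obtain ⟨N, hN⟩ := ENat.ne_top_iff_exists.1 (mt (MvPolynomial.orderAt_eq_top_iff p f).1 hf)
  refine ⟨N + 1, ?_⟩
  rw [mem_vanishingIdeal_pow_iff_le_orderAt, ← hN]
  exact_mod_cast Nat.not_succ_le_self N

theorem bddAbove_setOf_le_vanishingIdeal_pow (p : Fin n → K) {I : Ideal (MvPolynomial (Fin n) K)}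
    (hI : I ≠ ⊥) : BddAbove {m : ℕ | I ≤ vanishingIdeal p ^ m} := by
  obtain ⟨f, hfI, hf⟩ := Submodule.exists_mem_ne_zero_of_ne_bot hI
  obtain ⟨N, hN⟩ := exists_notMem_vanishingIdeal_pow p hf
  refine ⟨N, fun m hm => ?_⟩
  by_contra! hlt
  exact hN (Ideal.pow_le_pow_right hlt.le (hm hfI))

theorem ordIdeal_spec (p : Fin n → K) {I : Ideal (MvPolynomial (Fin n) K)} (hI : I ≠ ⊥) :
    I ≤ vanishingIdeal p ^ ordIdeal p I ∧ ¬ I ≤ vanishingIdeal p ^ (ordIdeal p I + 1) := by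
  have hbdd := bddAbove_setOf_le_vanishingIdeal_pow p hI
  refine ⟨Nat.sSup_mem ⟨0, by simp⟩ hbdd, fun h => ?_⟩
  have : ordIdeal p I + 1 ≤ ordIdeal p I := le_csSup hbdd h
  omega

theorem ordIdeal_eq_of_le_of_not_le (p : Fin n → K) {I : Ideal (MvPolynomial (Fin n) K)} {k : ℕ}
    (hle : I ≤ vanishingIdeal p ^ k) (hnot : ¬ I ≤ vanishingIdeal p ^ (k + 1)) :
    ordIdeal p I = k := by
  have hbdd : ∀ m ∈ {m : ℕ | I ≤ vanishingIdeal p ^ m}, m ≤ k := fun m hm => by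
    by_contra! hlt
    exact hnot (hm.trans (Ideal.pow_le_pow_right hlt))
  exact le_antisymm (csSup_le ⟨k, hle⟩ hbdd) (le_csSup ⟨k, hbdd⟩ hle)

end VanishingIdeal

/-- For nonzero ideals `I, J` of `K[x₁,…,xₙ]` and a point `p`,
`ord_p(I·J) = ord_p(I) + ord_p(J)`.  Equivalently, for nonzero polynomials `f, g`:
if `f ∉ m_p^{a+1}` and `g ∉ m_p^{c+1}`, then `f·g ∉ m_p^{a+c+1}`. -/
theorem stmt_3 {K : Type*} [Field K] {n : ℕ} (p : Fin n → K)
    (I J : Ideal (MvPolynomial (Fin n) K)) (hI : I ≠ ⊥) (hJ : J ≠ ⊥) :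
    ordIdeal p (I * J) = ordIdeal p I + ordIdeal p J ∧
    (∀ (f g : MvPolynomial (Fin n) K) (a c : ℕ), f ≠ 0 → g ≠ 0 →
      f ∉ vanishingIdeal p ^ (a + 1) → g ∉ vanishingIdeal p ^ (c + 1) →
      f * g ∉ vanishingIdeal p ^ (a + c + 1)) := by
  refine ⟨?_, fun f g a c _ _ => mul_notMem_vanishingIdeal_pow p⟩
  obtain ⟨hIle, hInot⟩ := ordIdeal_spec p hI
  obtain ⟨hJle, hJnot⟩ := ordIdeal_spec p hJ
  obtain ⟨f, hfI, hf⟩ := SetLike.not_le_iff_exists.1 hInot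
  obtain ⟨g, hgJ, hg⟩ := SetLike.not_le_iff_exists.1 hJnot
  have hle : I * J ≤ vanishingIdeal p ^ (ordIdeal p I + ordIdeal p J) := by
    rw [pow_add]
    exact Ideal.mul_mono hIle hJle
  refine ordIdeal_eq_of_le_of_not_le p hle fun h => ?_
  exact mul_notMem_vanishingIdeal_pow p hf hg (h (Ideal.mul_mem_mul hfI hgJ))
end

section
/- Let K be a field, m ≤ n, 1 ≤ k ≤ m, and let g ∈ K[x₁,…,xₙ] be nonzero. Then the largest integer c such that x_k^c divides φ_k(g) equals the largest integer c such that g ∈ ⟨x₁,…,x_m⟩^c. In other words, the multiplicity of the exceptional divisor in the total transform of g equals the ⟨x₁,…,x_m⟩-adic order of g along the blowup center. -/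
open MvPolynomial

namespace Stmt6Aux

variable {K : Type*} [Field K] {n : ℕ}

/-- total degree in the first `m` variables -/
def D (m : ℕ) (α : Fin n →₀ ℕ) : ℕ :=
  ∑ i ∈ Finset.univ.filter (fun i : Fin n => i.val < m), α i

lemma D_add (m : ℕ) (α β : Fin n →₀ ℕ) : D m (α + β) = D m α + D m β := by
  simp [D, Finset.sum_add_distrib]

lemma apply_le_D {m : ℕ} {k : Fin n} (hk : k.val < m) (α : Fin n →₀ ℕ) :
    α k ≤ D m α :=
  Finset.single_le_sum (fun i _ => Nat.zero_le _) (by simp [hk])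

lemma D_single {m : ℕ} {i : Fin n} (hi : i.val < m) :
    D m (Finsupp.single i 1) = 1 := by
  rw [D, Finset.sum_eq_single i]
  · simp
  · intro b _ hb; simp [Finsupp.single_apply, Ne.symm hb]
  · simp [hi]

lemma one_le_D_iff {m : ℕ} (α : Fin n →₀ ℕ) :
    1 ≤ D m α ↔ ∃ i : Fin n, i.val < m ∧ α i ≠ 0 := by
  rw [Nat.one_le_iff_ne_zero, D, Ne, Finset.sum_eq_zero_iff]
  push_neg
  simp

lemma centerIdeal_eq (m : ℕ) :
    centerIdeal K n m = Ideal.span (MvPolynomial.X '' {i : Fin n | i.val < m}) := by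
  unfold centerIdeal
  congr 1
  ext f
  constructor
  · rintro ⟨i, hi, rfl⟩; exact ⟨i, hi, rfl⟩
  · rintro ⟨i, hi, rfl⟩; exact ⟨i, hi, rfl⟩

lemma X_mem_centerIdeal {m : ℕ} {i : Fin n} (hi : i.val < m) :
    (X i : MvPolynomial (Fin n) K) ∈ centerIdeal K n m :=
  Ideal.subset_span ⟨i, hi, rfl⟩

lemma mem_centerIdeal_iff {m : ℕ} {f : MvPolynomial (Fin n) K} :
    f ∈ centerIdeal K n m ↔ ∀ α ∈ f.support, 1 ≤ D m α := by
  rw [centerIdeal_eq, mem_ideal_span_X_image]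
  exact forall₂_congr (fun α _ => by rw [one_le_D_iff]; tauto)

lemma mem_centerIdeal_pow {m c : ℕ} {g : MvPolynomial (Fin n) K} :
    g ∈ centerIdeal K n m ^ c ↔ ∀ α ∈ g.support, c ≤ D m α := by
  constructor
  · induction c generalizing g with
    | zero => intro _ α _; exact Nat.zero_le _
    | succ c ih =>
      rw [pow_succ]
      intro hg
      refine Submodule.mul_induction_on hg ?_ ?_
      · intro a ha b hb α hα
        obtain ⟨β, hβ, γ, hγ, rfl⟩ := Finset.mem_add.mp (MvPolynomial.support_mul _ _ hα)
        rw [D_add]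
        exact Nat.add_le_add (ih ha β hβ) (mem_centerIdeal_iff.mp hb γ hγ)
      · intro x y hx hy α hα
        rcases Finset.mem_union.mp (MvPolynomial.support_add hα) with h | h
        · exact hx α h
        · exact hy α h
  · induction c generalizing g with
    | zero => intro _; simp
    | succ c ih =>
      intro hg
      rw [g.as_sum]
      refine Ideal.sum_mem _ (fun α hα => ?_)
      have h1 : 1 ≤ D m α := le_trans (Nat.le_add_left 1 c) (hg α hα)
      obtain ⟨i, hi, hαi⟩ := (one_le_D_iff α).mp h1
      have hle : Finsupp.single i 1 ≤ α := by
        rw [Finsupp.single_le_iff]; exact Nat.one_le_iff_ne_zero.mpr hαi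
      have hsplit : α = Finsupp.single i 1 + (α - Finsupp.single i 1) :=
        (add_tsub_cancel_of_le hle).symm
      have hmul : (monomial α) (coeff α g) =
          X i * (monomial (α - Finsupp.single i 1)) (coeff α g) := by
        rw [X, monomial_mul, one_mul, ← hsplit]
      rw [hmul, pow_succ, mul_comm ((centerIdeal K n m) ^ c)]
      refine Ideal.mul_mem_mul (X_mem_centerIdeal hi) (ih ?_)
      intro β hβ
      rcases Finset.mem_singleton.mp (MvPolynomial.support_monomial_subset hβ) with rfl
      have h2 := hg α hα
      have : D m α = 1 + D m (α - Finsupp.single i 1) := by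
        conv_lhs => rw [hsplit]
        rw [D_add, D_single hi]
      omega

/-- the effect of `blowupChart` on exponents -/
noncomputable def T (m : ℕ) (k : Fin n) (α : Fin n →₀ ℕ) : Fin n →₀ ℕ :=
  α + Finsupp.single k (D m α - α k)

lemma T_apply_self {m : ℕ} {k : Fin n} (hk : k.val < m) (α : Fin n →₀ ℕ) :
    T m k α k = D m α := by
  simp only [T, Finsupp.add_apply, Finsupp.single_eq_same]
  exact Nat.add_sub_cancel' (apply_le_D hk α)

lemma T_apply_ne {m : ℕ} {k i : Fin n} (h : i ≠ k) (α : Fin n →₀ ℕ) :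
    T m k α i = α i := by
  simp [T, Finsupp.single_apply, Ne.symm h]

lemma D_split {m : ℕ} {k : Fin n} (hk : k.val < m) (α : Fin n →₀ ℕ) :
    D m α = α k + ∑ i ∈ Finset.univ.filter (fun i : Fin n => i.val < m ∧ i ≠ k), α i := by
  have hset : Finset.univ.filter (fun i : Fin n => i.val < m ∧ i ≠ k) =
      (Finset.univ.filter (fun i : Fin n => i.val < m)).erase k := by
    ext i
    simp [Finset.mem_erase, and_comm]
  rw [hset, D, ← Finset.add_sum_erase _ _ (by simp [hk] :
    k ∈ Finset.univ.filter (fun i : Fin n => i.val < m))]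

lemma T_injective {m : ℕ} {k : Fin n} (hk : k.val < m) :
    Function.Injective (T m k : (Fin n →₀ ℕ) → (Fin n →₀ ℕ)) := by
  intro α β h
  have hne : ∀ i, i ≠ k → α i = β i := by
    intro i hi
    rw [← T_apply_ne (m := m) hi α, ← T_apply_ne (m := m) hi β, h]
  have hD : D m α = D m β := by
    rw [← T_apply_self hk α, ← T_apply_self hk β, h]
  have hsum : ∑ i ∈ Finset.univ.filter (fun i : Fin n => i.val < m ∧ i ≠ k), α i =
      ∑ i ∈ Finset.univ.filter (fun i : Fin n => i.val < m ∧ i ≠ k), β i :=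
    Finset.sum_congr rfl (fun i hi => hne i (Finset.mem_filter.mp hi).2.2)
  have hkk : α k = β k := by
    have h1 := D_split hk α
    have h2 := D_split hk β
    omega
  ext i
  by_cases hik : i = k
  · rw [hik]; exact hkk
  · exact hne i hik

lemma chart_monomial {m : ℕ} {k : Fin n} (hk : k.val < m) (α : Fin n →₀ ℕ) (r : K) :
    blowupChart m k ((monomial α) r) = (monomial (T m k α)) r := by
  classical
  rw [blowupChart, aeval_monomial]
  have hprod : (α.prod fun i e =>
      (if i.val < m ∧ i ≠ k then X k * X i else X i : MvPolynomial (Fin n) K) ^ e) =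
      ∏ i : Fin n, (if i.val < m ∧ i ≠ k then X k * X i else X i :
        MvPolynomial (Fin n) K) ^ α i :=
    Finsupp.prod_fintype _ _ (fun i => pow_zero _)
  rw [hprod]
  have hfac : ∀ i : Fin n, (if i.val < m ∧ i ≠ k then X k * X i else X i :
      MvPolynomial (Fin n) K) ^ α i =
      X k ^ (if i.val < m ∧ i ≠ k then α i else 0) * X i ^ α i := by
    intro i
    by_cases h : i.val < m ∧ i ≠ k
    · simp [h, mul_pow]
    · simp [h]
  simp only [hfac]
  rw [Finset.prod_mul_distrib, Finset.prod_pow_eq_pow_sum]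
  have hsum : (∑ i : Fin n, if i.val < m ∧ i ≠ k then α i else 0) = D m α - α k := by
    rw [← Finset.sum_filter]
    have := D_split hk α
    omega
  have hmon : (∏ i : Fin n, (X i : MvPolynomial (Fin n) K) ^ α i) = (monomial α) 1 := by
    rw [monomial_eq, C_1, one_mul]
    exact (Finsupp.prod_fintype _ _ (fun i => pow_zero _)).symm
  rw [hsum, hmon, X_pow_eq_monomial, algebraMap_eq]
  rw [monomial_mul, C_mul_monomial, mul_one, mul_one]
  congr 1
  rw [T, add_comm]

lemma coeff_chart {m : ℕ} {k : Fin n} (hk : k.val < m) (g : MvPolynomial (Fin n) K)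
    (α : Fin n →₀ ℕ) :
    coeff (T m k α) (blowupChart m k g) = coeff α g := by
  classical
  conv_lhs => rw [g.as_sum]
  rw [map_sum]
  simp only [chart_monomial hk]
  rw [MvPolynomial.coeff_sum]
  simp only [coeff_monomial]
  have : ∀ β ∈ g.support, (if T m k β = T m k α then coeff β g else 0) =
      if β = α then coeff β g else 0 := by
    intro β _
    congr 1
    simp only [eq_iff_iff]
    exact ⟨fun h => T_injective hk h, fun h => by rw [h]⟩
  rw [Finset.sum_congr rfl this, Finset.sum_ite_eq' g.support α (fun β => coeff β g)]
  by_cases hα : α ∈ g.support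
  · simp [hα]
  · simp [hα, MvPolynomial.notMem_support_iff.mp hα]

lemma support_chart {m : ℕ} {k : Fin n} (hk : k.val < m) (g : MvPolynomial (Fin n) K) :
    (blowupChart m k g).support = g.support.image (T m k) := by
  classical
  ext β
  simp only [MvPolynomial.mem_support_iff, Finset.mem_image]
  constructor
  · intro hβ
    have heq : coeff β (blowupChart m k g) =
        ∑ α ∈ g.support, if T m k α = β then coeff α g else 0 := by
      conv_lhs => rw [g.as_sum]
      rw [map_sum]
      simp only [chart_monomial hk]
      rw [MvPolynomial.coeff_sum]
      simp only [coeff_monomial]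
    rw [heq] at hβ
    obtain ⟨α, hα, hne⟩ := Finset.exists_ne_zero_of_sum_ne_zero hβ
    by_cases hT : T m k α = β
    · exact ⟨α, MvPolynomial.mem_support_iff.mp hα, hT⟩
    · simp [hT] at hne
  · rintro ⟨α, hα, rfl⟩
    rw [coeff_chart hk]
    exact hα

lemma X_pow_dvd_iff {f : MvPolynomial (Fin n) K} {k : Fin n} {c : ℕ} :
    (X k : MvPolynomial (Fin n) K) ^ c ∣ f ↔ ∀ β ∈ f.support, c ≤ β k := by
  classical
  constructor
  · rintro ⟨q, rfl⟩ β hβ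
    have hsup : ((X k : MvPolynomial (Fin n) K) ^ c).support = {Finsupp.single k c} := by
      rw [X_pow_eq_monomial, support_monomial]
      simp
    obtain ⟨a, ha, b, hb, rfl⟩ := Finset.mem_add.mp (MvPolynomial.support_mul _ _ hβ)
    rw [hsup, Finset.mem_singleton] at ha
    subst ha
    simp
  · intro h
    rw [f.as_sum]
    refine Finset.dvd_sum (fun β hβ => ?_)
    rw [X_pow_eq_monomial]
    rw [monomial_dvd_monomial]
    exact ⟨Or.inr (by rw [Finsupp.single_le_iff]; exact h β hβ), one_dvd _⟩

end Stmt6Aux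

open Stmt6Aux in
/-- For a nonzero polynomial `g`, the largest `c` such that `x_k^c`
divides `φ_k(g)` equals the largest `c` with `g ∈ ⟨x₁,…,x_m⟩^c`: the multiplicity of
the exceptional divisor in the total transform of `g` is the order of `g` along the
blowup center. -/
theorem stmt_6 {K : Type*} [Field K] {n : ℕ} (m : ℕ) (k : Fin n)
    (hm : m ≤ n) (hk : k.val < m) (g : MvPolynomial (Fin n) K) (hg : g ≠ 0) :
    sSup {c : ℕ | (MvPolynomial.X k : MvPolynomial (Fin n) K) ^ c ∣ blowupChart m k g} =
      sSup {c : ℕ | g ∈ centerIdeal K n m ^ c} := by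
  classical
  have hsupp : g.support.Nonempty :=
    Finset.nonempty_iff_ne_empty.mpr (fun h => hg (MvPolynomial.support_eq_empty.mp h))
  set c₀ : ℕ := g.support.inf' hsupp (D m) with hc₀
  have h2 : {c : ℕ | g ∈ centerIdeal K n m ^ c} = Set.Iic c₀ := by
    ext c
    rw [Set.mem_setOf_eq, mem_centerIdeal_pow, Set.mem_Iic, Finset.le_inf'_iff]
  have h1 : {c : ℕ | (MvPolynomial.X k : MvPolynomial (Fin n) K) ^ c ∣ blowupChart m k g} =
      Set.Iic c₀ := by
    ext c
    rw [Set.mem_setOf_eq, X_pow_dvd_iff, support_chart hk, Set.mem_Iic, Finset.le_inf'_iff]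
    constructor
    · intro h α hα
      have := h (T m k α) (Finset.mem_image_of_mem _ hα)
      rwa [T_apply_self hk] at this
    · intro h β hβ
      obtain ⟨α, hα, rfl⟩ := Finset.mem_image.mp hβ
      rw [T_apply_self hk]
      exact h α hα
  rw [h1, h2]
end

section
/- Let K be a field, m ≤ n, 1 ≤ k ≤ m, let e₁,…,eₙ be natural numbers with e₁ + … + e_m ≥ b, and let I be the monomial ideal ⟨x₁⟩^{e₁}·…·⟨xₙ⟩^{eₙ} of R = K[x₁,…,xₙ]. Then the controlled transform of (I,b) in chart k equals ⟨x_k⟩^{(e₁+…+e_m)−b} · ∏_{i≠k} ⟨x_i⟩^{e_i}. (Hence the transform of a monomial singularity is monomial, and the new exceptional exponent is the sum of the exponents of the hypersurfaces containing the center, minus b.) -/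
/-- For the monomial ideal `I = ⟨x₁⟩^{e₁}·…·⟨xₙ⟩^{eₙ}` with
`e₁+…+e_m ≥ b`, the controlled transform of `(I,b)` in chart `k` (`1 ≤ k ≤ m`) is
`⟨x_k⟩^{(e₁+…+e_m)−b} · ∏_{i≠k} ⟨x_i⟩^{e_i}`: the transform of a monomial singularity
is monomial, with new exceptional exponent the sum of the exponents of the
hypersurfaces containing the center, minus `b`. -/
theorem stmt_9 {K : Type*} [Field K] {n : ℕ} (m : ℕ) (k : Fin n) (b : ℕ)
    (hm : m ≤ n) (hk : k.val < m) (e : Fin n → ℕ)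
    (hb : b ≤ ∑ i ∈ Finset.univ.filter (fun i : Fin n => i.val < m), e i) :
    controlledTransform m k b (∏ i, Ideal.span {MvPolynomial.X i} ^ e i) =
      Ideal.span {(MvPolynomial.X k : MvPolynomial (Fin n) K)} ^
          ((∑ i ∈ Finset.univ.filter (fun i : Fin n => i.val < m), e i) - b) *
        ∏ i ∈ Finset.univ.erase k, Ideal.span {MvPolynomial.X i} ^ e i := by
  classical
  set S := ∑ i ∈ Finset.univ.filter (fun i : Fin n => i.val < m), e i with hS
  set N : MvPolynomial (Fin n) K := ∏ i ∈ Finset.univ.erase k, MvPolynomial.X i ^ e i with hN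
  set M : MvPolynomial (Fin n) K := ∏ i, MvPolynomial.X i ^ e i with hM
  have hMN : M = MvPolynomial.X k ^ e k * N :=
    (Finset.mul_prod_erase Finset.univ _ (Finset.mem_univ k)).symm
  -- the sum split
  set T := ∑ i ∈ Finset.univ.filter (fun i : Fin n => i.val < m ∧ i ≠ k), e i with hT
  have hTS : T + e k = S := by
    rw [hT, hS]
    have hfe : Finset.univ.filter (fun i : Fin n => i.val < m ∧ i ≠ k)
        = (Finset.univ.filter (fun i : Fin n => i.val < m)).erase k := by
      ext i
      simp [Finset.mem_erase, and_comm]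
    rw [hfe]
    exact Finset.sum_erase_add _ _ (by simp [hk])
  have hφM : blowupChart m k M = MvPolynomial.X k ^ S * N := by
    have h1 : blowupChart m k M = ∏ i, (if i.val < m ∧ i ≠ k
        then MvPolynomial.X k * MvPolynomial.X i else (MvPolynomial.X i : MvPolynomial (Fin n) K)) ^ e i := by
      rw [hM, map_prod]
      simp [blowupChart]
    have h2 : ∀ i : Fin n, (if i.val < m ∧ i ≠ k
        then MvPolynomial.X k * MvPolynomial.X i else (MvPolynomial.X i : MvPolynomial (Fin n) K)) ^ e i
        = MvPolynomial.X k ^ (if i.val < m ∧ i ≠ k then e i else 0) * MvPolynomial.X i ^ e i := by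
      intro i; split <;> simp [mul_pow]
    rw [h1]
    simp_rw [h2]
    rw [Finset.prod_mul_distrib, Finset.prod_pow_eq_pow_sum, ← Finset.sum_filter]
    simp only [← hT, ← hM]
    rw [hMN, ← mul_assoc, ← pow_add, hTS]
  have hX : (MvPolynomial.X k : MvPolynomial (Fin n) K) ^ b ≠ 0 :=
    pow_ne_zero _ (MvPolynomial.X_ne_zero k)
  have hIdeal : (∏ i, Ideal.span {MvPolynomial.X i} ^ e i : Ideal (MvPolynomial (Fin n) K))
      = Ideal.span {M} := by
    rw [hM]
    simp_rw [Ideal.span_singleton_pow]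
    rw [Ideal.prod_span_singleton]
  have hRHS : Ideal.span {(MvPolynomial.X k : MvPolynomial (Fin n) K)} ^ (S - b) *
      ∏ i ∈ Finset.univ.erase k, Ideal.span {MvPolynomial.X i} ^ e i
      = Ideal.span {MvPolynomial.X k ^ (S - b) * N} := by
    simp_rw [Ideal.span_singleton_pow]
    rw [Ideal.prod_span_singleton, ← hN, Ideal.span_singleton_mul_span_singleton]
  rw [hIdeal, hRHS, controlledTransform]
  apply le_antisymm
  · rw [Ideal.span_le]
    rintro g ⟨f, hf, hfg⟩
    rw [Ideal.mem_span_singleton] at hf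
    obtain ⟨c, rfl⟩ := hf
    rw [SetLike.mem_coe, Ideal.mem_span_singleton]
    refine ⟨blowupChart m k c, ?_⟩
    apply mul_left_cancel₀ hX
    rw [hfg, map_mul, hφM]
    rw [show (MvPolynomial.X k : MvPolynomial (Fin n) K) ^ b *
        (MvPolynomial.X k ^ (S - b) * N * blowupChart m k c)
        = MvPolynomial.X k ^ (b + (S - b)) * N * blowupChart m k c by ring]
    rw [Nat.add_sub_cancel' hb]

  · rw [Ideal.span_singleton_le_iff_mem]
    apply Ideal.subset_span
    refine ⟨M, Ideal.mem_span_singleton_self M, ?_⟩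
    rw [hφM, ← mul_assoc, ← pow_add, Nat.add_sub_cancel' hb]
end

section
/- Let K be a field of characteristic zero, let f₁,…,f_N ∈ R = K[x₁,…,xₙ], and let d₁,…,d_N be positive integers. For m ≥ 1 let B_m ⊆ R be the ideal generated by all products ∏_{j=1}^{s} ∂^{α_j} f_{i_j} (s ≥ 1), where each α_j is a multi-index of partial differentiation with |α_j| < d_{i_j} and ∑_{j=1}^{s} (d_{i_j} − |α_j|) ≥ m; set B₀ = R. Then B_i·B_j ⊆ B_{i+j} for all i, j ≥ 0, and the graded family (B_m) is differentially closed: for every i ≥ 0, every g ∈ B_{i+1}, and every variable xₗ, one has ∂g/∂xₗ ∈ B_i. (Hence the differential closure of the Rees algebra generated by the f_i in degrees d_i is generated by all partial derivatives of order j < d_i of the f_i, placed in degree d_i − j.) -/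
/-- Iterated partial derivative `∂^α f` along a list of variables `L`
(the multi-index `α` is the multiset of entries of `L`, of order `L.length`). -/
noncomputable def iterPDeriv {K : Type*} [Field K] {n : ℕ} (L : List (Fin n))
    (f : MvPolynomial (Fin n) K) : MvPolynomial (Fin n) K :=
  L.foldr (fun i g => MvPolynomial.pderiv i g) f

/-- The family `(B_m)`: `B₀ = R`, and for `m ≥ 1`, `B_m` is the ideal generated by all
products `∏_{j=1}^{s} ∂^{α_j} f_{i_j}` (`s ≥ 1`) with each `|α_j| < d_{i_j}` and
`∑_j (d_{i_j} − |α_j|) ≥ m`. -/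
noncomputable def closureFamily {K : Type*} [Field K] {n N : ℕ}
    (f : Fin N → MvPolynomial (Fin n) K) (d : Fin N → ℕ) (m : ℕ) :
    Ideal (MvPolynomial (Fin n) K) :=
  if m = 0 then ⊤
  else Ideal.span {g | ∃ (s : ℕ), 1 ≤ s ∧ ∃ (idx : Fin s → Fin N) (L : Fin s → List (Fin n)),
    (∀ j, (L j).length < d (idx j)) ∧
    m ≤ ∑ j, (d (idx j) - (L j).length) ∧
    g = ∏ j, iterPDeriv (L j) (f (idx j))}

/-!
Give the factor `∂^α f_i` of a generator the weight `d_i - |α|`, so that a generator of `B_m`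
is a product of total weight at least `m`. Weights add under multiplication, so `(B_m)` is a
graded family. A partial derivative `∂_l` of a single factor is again an admissible factor of
weight one less, or, if the weight was `1`, an arbitrary element of `B_0 = R`. By the Leibniz
rule, `∂_l` of a product of total weight `w` is a sum of products of total weight at least
`w - 1`, and the Leibniz rule again extends this from the generators to the whole ideal.
-/

section Derivation

variable {S R : Type*} [CommSemiring S] [CommSemiring R] [Algebra S R] (D : Derivation S R R)

theorem Derivation.map_mem_of_mem_span {s : Set R} {J : Ideal R} (hsJ : s ⊆ J)
    (hD : ∀ x ∈ s, D x ∈ J) {x : R} (hx : x ∈ Ideal.span s) : D x ∈ J := by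
  induction hx using Submodule.span_induction with
  | mem x hx => exact hD x hx
  | zero => simp
  | add x y _ _ hx hy => rw [map_add]; exact add_mem hx hy
  | smul a x hx hDx =>
    rw [smul_eq_mul, D.leibniz, smul_eq_mul, smul_eq_mul]
    exact add_mem (J.mul_mem_left a hDx) (J.mul_mem_right _ (Ideal.span_le.mpr hsJ hx))

theorem Derivation.map_prod_mem_of_gradedMonoid {ι : Type*} (A : ℕ → Ideal R)
    [SetLike.GradedMonoid A] (hA : Antitone A) (w : ι → ℕ) (x : ι → R) (t : Finset ι)
    (hx : ∀ k ∈ t, x k ∈ A (w k)) (hDx : ∀ k ∈ t, D (x k) ∈ A (w k - 1)) :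
    D (∏ k ∈ t, x k) ∈ A (∑ k ∈ t, w k - 1) := by
  classical
  induction t using Finset.induction_on with
  | empty => simp
  | insert a t ha ih =>
    have hxt := SetLike.prod_mem_graded A w x fun k hk => hx k (Finset.mem_insert_of_mem hk)
    have hDxt := ih (fun k hk => hx k (Finset.mem_insert_of_mem hk))
      (fun k hk => hDx k (Finset.mem_insert_of_mem hk))
    rw [Finset.prod_insert ha, Finset.sum_insert ha, D.leibniz, smul_eq_mul, smul_eq_mul]
    refine add_mem (hA ?_ (SetLike.mul_mem_graded (hx a (Finset.mem_insert_self a t)) hDxt))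
      (hA ?_ (SetLike.mul_mem_graded hxt (hDx a (Finset.mem_insert_self a t)))) <;> omega

end Derivation

section ClosureFamily

variable {K : Type*} [Field K] {n N : ℕ} (f : Fin N → MvPolynomial (Fin n) K) (d : Fin N → ℕ)

def closureGenerators (m : ℕ) : Set (MvPolynomial (Fin n) K) :=
  {g | ∃ (s : ℕ), 1 ≤ s ∧ ∃ (idx : Fin s → Fin N) (L : Fin s → List (Fin n)),
    (∀ j, (L j).length < d (idx j)) ∧
    m ≤ ∑ j, (d (idx j) - (L j).length) ∧
    g = ∏ j, iterPDeriv (L j) (f (idx j))}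

theorem closureFamily_zero : closureFamily f d 0 = ⊤ := if_pos rfl

theorem closureFamily_of_ne_zero {m : ℕ} (hm : m ≠ 0) :
    closureFamily f d m = Ideal.span (closureGenerators f d m) := if_neg hm

theorem closureGenerators_antitone : Antitone (closureGenerators f d) := by
  rintro m m' hmm' g ⟨s, hs, idx, L, hL, hm', rfl⟩
  exact ⟨s, hs, idx, L, hL, hmm'.trans hm', rfl⟩

theorem closureFamily_antitone : Antitone (closureFamily f d) := by
  intro m m' hmm'
  rcases Nat.eq_zero_or_pos m with rfl | hm
  · simp [closureFamily_zero]
  rw [closureFamily_of_ne_zero f d hm.ne', closureFamily_of_ne_zero f d (by omega)]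
  exact Ideal.span_mono (closureGenerators_antitone f d hmm')

theorem mul_mem_closureGenerators {i j : ℕ} {a b : MvPolynomial (Fin n) K}
    (ha : a ∈ closureGenerators f d i) (hb : b ∈ closureGenerators f d j) :
    a * b ∈ closureGenerators f d (i + j) := by
  obtain ⟨s, hs, idxa, La, hLa, hi, rfl⟩ := ha
  obtain ⟨t, -, idxb, Lb, hLb, hj, rfl⟩ := hb
  refine ⟨s + t, by omega, Fin.addCases idxa idxb, Fin.addCases La Lb,
    Fin.addCases (by simpa using hLa) (by simpa using hLb), ?_, by simp [Fin.prod_univ_add]⟩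
  simp only [Fin.sum_univ_add, Fin.addCases_left, Fin.addCases_right]
  omega

theorem closureFamily_mul_le (i j : ℕ) :
    closureFamily f d i * closureFamily f d j ≤ closureFamily f d (i + j) := by
  rcases Nat.eq_zero_or_pos i with rfl | hi
  · simp [closureFamily_zero]
  rcases Nat.eq_zero_or_pos j with rfl | hj
  · simp [closureFamily_zero]
  rw [closureFamily_of_ne_zero f d hi.ne', closureFamily_of_ne_zero f d hj.ne',
    closureFamily_of_ne_zero f d (by omega), Ideal.span_mul_span']
  refine Ideal.span_mono ?_
  rintro _ ⟨a, ha, b, hb, rfl⟩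
  exact mul_mem_closureGenerators f d ha hb

instance closureFamily.gradedMonoid : SetLike.GradedMonoid (closureFamily f d) where
  one_mem := by simp [closureFamily_zero]
  mul_mem i j _ _ ha hb := closureFamily_mul_le f d i j (Ideal.mul_mem_mul ha hb)

theorem iterPDeriv_mem_closureFamily {i : Fin N} {L : List (Fin n)} (hL : L.length < d i) :
    iterPDeriv L (f i) ∈ closureFamily f d (d i - L.length) := by
  rw [closureFamily_of_ne_zero f d (by omega)]
  exact Ideal.subset_span ⟨1, le_rfl, fun _ => i, fun _ => L, fun _ => hL, by simp, by simp⟩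

theorem pderiv_iterPDeriv_mem_closureFamily (l : Fin n) {i : Fin N} {L : List (Fin n)}
    (hL : L.length < d i) :
    MvPolynomial.pderiv l (iterPDeriv L (f i)) ∈ closureFamily f d (d i - L.length - 1) := by
  by_cases hl : (l :: L).length < d i
  · have := iterPDeriv_mem_closureFamily f d hl
    rwa [List.length_cons, ← Nat.sub_sub] at this
  · rw [show d i - L.length - 1 = 0 by rw [List.length_cons] at hl; omega, closureFamily_zero]
    trivial

theorem pderiv_mem_closureFamily_of_mem_closureGenerators (l : Fin n) {m : ℕ}
    {g : MvPolynomial (Fin n) K} (hg : g ∈ closureGenerators f d (m + 1)) :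
    MvPolynomial.pderiv l g ∈ closureFamily f d m := by
  obtain ⟨s, -, idx, L, hL, hm, rfl⟩ := hg
  refine closureFamily_antitone f d (by omega)
    ((MvPolynomial.pderiv l).map_prod_mem_of_gradedMonoid (closureFamily f d)
      (closureFamily_antitone f d) (fun j => d (idx j) - (L j).length) _ Finset.univ
      (fun j _ => iterPDeriv_mem_closureFamily f d (hL j))
      (fun j _ => pderiv_iterPDeriv_mem_closureFamily f d l (hL j)))

theorem pderiv_mem_closureFamily (l : Fin n) {m : ℕ} {g : MvPolynomial (Fin n) K}
    (hg : g ∈ closureFamily f d (m + 1)) : MvPolynomial.pderiv l g ∈ closureFamily f d m := by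
  rw [closureFamily_of_ne_zero f d m.succ_ne_zero] at hg
  refine (MvPolynomial.pderiv l).map_mem_of_mem_span ?_
    (fun x hx => pderiv_mem_closureFamily_of_mem_closureGenerators f d l hx) hg
  exact fun x hx => closureFamily_antitone f d m.le_succ
    (closureFamily_of_ne_zero f d m.succ_ne_zero ▸ Ideal.subset_span hx)

end ClosureFamily

theorem stmt_11_general {K : Type*} [Field K] {n N : ℕ}
    (f : Fin N → MvPolynomial (Fin n) K) (d : Fin N → ℕ) :
    (∀ i j : ℕ, closureFamily f d i * closureFamily f d j ≤ closureFamily f d (i + j)) ∧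
    (∀ i : ℕ, ∀ g ∈ closureFamily f d (i + 1), ∀ l : Fin n,
      MvPolynomial.pderiv l g ∈ closureFamily f d i) :=
  ⟨closureFamily_mul_le f d, fun _ _ hg l => pderiv_mem_closureFamily f d l hg⟩

/-- Over a field of characteristic zero, the family `(B_m)` built
from `f₁,…,f_N` and positive degrees `d₁,…,d_N` is a graded family of ideals
(`B_i·B_j ⊆ B_{i+j}`) which is differentially closed: every first order partial
derivative of an element of `B_{i+1}` lies in `B_i`.  (Hence the differential closure
of the Rees algebra generated by the `fᵢ` in degrees `dᵢ` is generated by all partial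
derivatives of order `j < dᵢ` of the `fᵢ`, placed in degree `dᵢ − j`.) -/
theorem stmt_11 {K : Type*} [Field K] [CharZero K] {n N : ℕ}
    (f : Fin N → MvPolynomial (Fin n) K) (d : Fin N → ℕ) (hd : ∀ i, 0 < d i) :
    (∀ i j : ℕ, closureFamily f d i * closureFamily f d j ≤ closureFamily f d (i + j)) ∧
    (∀ i : ℕ, ∀ g ∈ closureFamily f d (i + 1), ∀ l : Fin n,
      MvPolynomial.pderiv l g ∈ closureFamily f d i) :=
  stmt_11_general f d
end

section
/- Let K be an infinite field of characteristic zero, let m ≤ n, let b ≥ 0, and let g ∈ K[x₁,…,xₙ]. If g ∈ m_p^b for every point p ∈ Kⁿ with p₁ = … = p_m = 0, then g ∈ ⟨x₁,…,x_m⟩^b. (That is, a polynomial whose order is at least b at every point of the coordinate subspace x₁ = … = x_m = 0 lies in the b-th power of the ideal of that subspace; this is why a straight center contained in the singular locus of (I,b) yields I ⊆ Ideal(Z)^b, so that the controlled transform is defined.) -/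
section Aux

open MvPolynomial

/-- Weight of a monomial: total degree in the first `m` variables. -/
def wt (m : ℕ) {n : ℕ} (d : Fin n →₀ ℕ) : ℕ := ∑ i : Fin n, if i.val < m then d i else 0

lemma wt_add (m : ℕ) {n : ℕ} (a b : Fin n →₀ ℕ) : wt m (a + b) = wt m a + wt m b := by
  simp only [wt, Finsupp.add_apply]
  rw [← Finset.sum_add_distrib]
  refine Finset.sum_congr rfl fun i _ => ?_
  split <;> simp

lemma wt_single (m : ℕ) {n : ℕ} (i : Fin n) (hi : i.val < m) :
    wt m (Finsupp.single i 1) = 1 := by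
  classical
  rw [wt, Finset.sum_eq_single i]
  · simp [hi]
  · intro j _ hj
    simp [Finsupp.single_apply, Ne.symm hj]
  · simp

lemma wt_filter (m : ℕ) {n : ℕ} (d : Fin n →₀ ℕ) :
    wt m (d.filter (fun i => i.val < m)) = wt m d := by
  classical
  refine Finset.sum_congr rfl fun i _ => ?_
  by_cases h : i.val < m <;> simp [h, Finsupp.filter_apply]

lemma wt_mul_support {K : Type*} [Field K] {n m : ℕ} {a b : ℕ} {x y : MvPolynomial (Fin n) K}
    (hx : ∀ d ∈ x.support, a ≤ wt m d) (hy : ∀ d ∈ y.support, b ≤ wt m d) :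
    ∀ d ∈ (x * y).support, a + b ≤ wt m d := by
  intro d hd
  rw [MvPolynomial.mem_support_iff, MvPolynomial.coeff_mul] at hd
  obtain ⟨⟨u, v⟩, huv, hne⟩ := Finset.exists_ne_zero_of_sum_ne_zero hd
  have hu : coeff u x ≠ 0 := fun h => hne (by simp [h])
  have hv : coeff v y ≠ 0 := fun h => hne (by simp [h])
  have hsum : u + v = d := Finset.HasAntidiagonal.mem_antidiagonal.1 huv
  have : wt m d = wt m u + wt m v := by rw [← hsum, wt_add]
  rw [this]
  exact Nat.add_le_add (hx u (MvPolynomial.mem_support_iff.2 hu))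
    (hy v (MvPolynomial.mem_support_iff.2 hv))

/-- The ideal of polynomials all of whose monomials have weight `≥ b`. -/
def wtIdeal (K : Type*) [Field K] (n m b : ℕ) : Ideal (MvPolynomial (Fin n) K) where
  carrier := {h | ∀ d ∈ h.support, b ≤ wt m d}
  zero_mem' := by simp
  add_mem' := by
    intro x y hx hy d hd
    rcases Finset.mem_union.1 (MvPolynomial.support_add hd) with h | h
    · exact hx d h
    · exact hy d h
  smul_mem' := by
    intro c x hx d hd
    have h := wt_mul_support (a := 0) (m := m) (x := c) (y := x)
      (fun _ _ => Nat.zero_le _) hx d hd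
    simpa using h

lemma mem_wtIdeal {K : Type*} [Field K] {n m b : ℕ} {h : MvPolynomial (Fin n) K} :
    h ∈ wtIdeal K n m b ↔ ∀ d ∈ h.support, b ≤ wt m d := Iff.rfl

lemma wtIdeal_pow_le (K : Type*) [Field K] (n m : ℕ) (b : ℕ) :
    wtIdeal K n m 1 ^ b ≤ wtIdeal K n m b := by
  induction b with
  | zero => intro x _; exact mem_wtIdeal.2 fun d _ => Nat.zero_le _
  | succ b ih =>
    rw [pow_succ]
    refine Ideal.mul_le.2 fun f hf g hg => ?_
    exact mem_wtIdeal.2 (wt_mul_support (mem_wtIdeal.1 (ih hf)) (mem_wtIdeal.1 hg))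

lemma monomial_mem_pow {K : Type*} [Field K] {n : ℕ} (m : ℕ) (b : ℕ) :
    ∀ (d : Fin n →₀ ℕ) (c : K), b ≤ wt m d →
      MvPolynomial.monomial d c ∈ centerIdeal K n m ^ b := by
  induction b with
  | zero => intro d c _; simp
  | succ b ih =>
    intro d c hwt
    obtain ⟨i, him, hdi⟩ : ∃ i : Fin n, i.val < m ∧ 0 < d i := by
      by_contra h
      push_neg at h
      have : wt m d = 0 := Finset.sum_eq_zero fun i _ => by
        by_cases hi : i.val < m
        · simpa [hi] using h i hi
        · simp [hi]
      omega
    have hle : Finsupp.single i 1 ≤ d := Finsupp.single_le_iff.2 hdi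
    set d' := d - Finsupp.single i 1 with hd'
    have hdd : d' + Finsupp.single i 1 = d := tsub_add_cancel_of_le hle
    have hwt' : b ≤ wt m d' := by
      have := wt_add m d' (Finsupp.single i 1)
      rw [hdd, wt_single m i him] at this
      omega
    have heq : MvPolynomial.monomial d c =
        MvPolynomial.monomial d' c * MvPolynomial.X i := by
      rw [MvPolynomial.X, MvPolynomial.monomial_mul, mul_one, hdd]
    rw [heq, pow_succ]
    exact Ideal.mul_mem_mul (ih d' c hwt') (Ideal.subset_span ⟨i, him, rfl⟩)

lemma mem_centerIdeal_pow_of_wt {K : Type*} [Field K] {n m b : ℕ}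
    {g : MvPolynomial (Fin n) K} (h : ∀ d ∈ g.support, b ≤ wt m d) :
    g ∈ centerIdeal K n m ^ b := by
  rw [← MvPolynomial.support_sum_monomial_coeff g]
  exact Ideal.sum_mem _ fun d hd => monomial_mem_pow m b d _ (h d hd)

/-- `ψ` sets the first `m` variables to `0`; it kills monomials of positive
weight and fixes the rest. -/
lemma aeval_zero_monomial {K : Type*} [Field K] {n : ℕ} (m : ℕ) (e : Fin n →₀ ℕ) (c : K) :
    (MvPolynomial.aeval (R := K) (fun i : Fin n => if i.val < m then 0 else MvPolynomial.X i))
        (MvPolynomial.monomial e c) =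
      if wt m e = 0 then MvPolynomial.monomial e c else 0 := by
  classical
  rw [MvPolynomial.aeval_monomial]
  by_cases h : wt m e = 0
  · rw [if_pos h]
    have hsupp : ∀ i ∈ e.support, ¬ i.val < m := by
      intro i hi him
      have : e i = 0 := by
        by_contra hne
        have : 0 < ∑ j : Fin n, if j.val < m then e j else 0 := by
          refine Finset.sum_pos' (fun j _ => by positivity) ⟨i, Finset.mem_univ i, ?_⟩
          simpa [him] using Nat.pos_of_ne_zero hne
        have h' : (∑ j : Fin n, if j.val < m then e j else 0) = 0 := h
        omega
      exact Finsupp.mem_support_iff.1 hi this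
    have : (e.prod fun i k =>
          (if i.val < m then 0 else MvPolynomial.X i : MvPolynomial (Fin n) K) ^ k)
        = e.prod fun i k => (MvPolynomial.X i) ^ k := by
      refine Finset.prod_congr rfl fun i hi => ?_
      simp only [if_neg (hsupp i hi)]
    rw [this, MvPolynomial.monomial_eq]
    rfl
  · rw [if_neg h]
    obtain ⟨i, him, hei⟩ : ∃ i : Fin n, i.val < m ∧ 0 < e i := by
      by_contra hc
      push_neg at hc
      exact h (Finset.sum_eq_zero fun i _ => by
        by_cases hi : i.val < m
        · simpa [hi] using hc i hi
        · simp [hi])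
    have : (e.prod fun i k =>
        (if i.val < m then 0 else MvPolynomial.X i : MvPolynomial (Fin n) K) ^ k) = 0 := by
      refine Finset.prod_eq_zero (Finsupp.mem_support_iff.2 (by omega : e i ≠ 0)) ?_
      simp only [if_pos him]
      exact zero_pow (by omega)
    rw [this, mul_zero]

lemma coeff_aeval_zero {K : Type*} [Field K] {n : ℕ} (m : ℕ) (h : MvPolynomial (Fin n) K)
    (d : Fin n →₀ ℕ) (hd : wt m d = 0) :
    MvPolynomial.coeff d
      ((MvPolynomial.aeval (R := K) (fun i : Fin n => if i.val < m then 0 else MvPolynomial.X i)) h)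
      = MvPolynomial.coeff d h := by
  classical
  conv_lhs => rw [← MvPolynomial.support_sum_monomial_coeff h]
  rw [map_sum, MvPolynomial.coeff_sum]
  have heq : ∀ e ∈ h.support,
      MvPolynomial.coeff d ((MvPolynomial.aeval (R := K)
        (fun i : Fin n => if i.val < m then 0 else MvPolynomial.X i))
        (MvPolynomial.monomial e (MvPolynomial.coeff e h)))
      = if e = d then MvPolynomial.coeff e h else 0 := by
    intro e _
    rw [aeval_zero_monomial]
    by_cases hwe : wt m e = 0
    · rw [if_pos hwe, MvPolynomial.coeff_monomial]
    · rw [if_neg hwe, MvPolynomial.coeff_zero, if_neg]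
      rintro rfl; exact hwe hd
  rw [Finset.sum_congr rfl heq, Finset.sum_ite_eq' h.support d]
  by_cases hds : d ∈ h.support
  · rw [if_pos hds]
  · rw [if_neg hds, eq_comm, MvPolynomial.notMem_support_iff.1 hds]

/-- Partial evaluation of the last variables at `q`, written on a monomial. -/
lemma aeval_partial_monomial {K : Type*} [Field K] {n : ℕ} (m : ℕ) (q : Fin n → K)
    (e : Fin n →₀ ℕ) (c : K) :
    (MvPolynomial.aeval (R := K)
        (fun i : Fin n => if i.val < m then MvPolynomial.X i else MvPolynomial.C (q i)))
        (MvPolynomial.monomial e c) =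
      MvPolynomial.monomial (e.filter fun i => i.val < m)
        (c * MvPolynomial.eval q
          (MvPolynomial.monomial (e.filter fun i => ¬ i.val < m) (1 : K))) := by
  classical
  rw [MvPolynomial.aeval_monomial]
  have hsplit := Finsupp.prod_filter_mul_prod_filter_not (f := e) (p := fun i => i.val < m)
    (fun (i : Fin n) (k : ℕ) => (if i.val < m then MvPolynomial.X i else MvPolynomial.C (q i)) ^ k)
  rw [← hsplit]
  have h1 : ((e.filter fun i => i.val < m).prod fun i k =>
        (if i.val < m then MvPolynomial.X i else MvPolynomial.C (q i)) ^ k)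
      = MvPolynomial.monomial (e.filter fun i => i.val < m) (1 : K) := by
    rw [MvPolynomial.monic_monomial_eq]
    refine Finset.prod_congr rfl fun i hi => ?_
    rw [Finsupp.support_filter, Finset.mem_filter] at hi
    simp only [if_pos hi.2]
  have h2 : ((e.filter fun i => ¬ i.val < m).prod fun i k =>
        (if i.val < m then MvPolynomial.X i else MvPolynomial.C (q i)) ^ k)
      = MvPolynomial.C (MvPolynomial.eval q
          (MvPolynomial.monomial (e.filter fun i => ¬ i.val < m) (1 : K))) := by
    rw [MvPolynomial.eval_monomial, one_mul, Finsupp.prod, Finsupp.prod, map_prod]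
    refine Finset.prod_congr rfl fun i hi => ?_
    rw [Finsupp.support_filter, Finset.mem_filter] at hi
    simp only [if_neg hi.2, map_pow]
  rw [h1, h2, MvPolynomial.algebraMap_eq,
    mul_comm (MvPolynomial.monomial (e.filter fun i => i.val < m) (1 : K)),
    MvPolynomial.C_mul_monomial, MvPolynomial.C_mul_monomial, mul_one]

end Aux

/-- Over an infinite field of characteristic zero: if
`g ∈ m_p^b` for every point `p` of the coordinate subspace `x₁ = … = x_m = 0`,
then `g ∈ ⟨x₁,…,x_m⟩^b`. -/
theorem stmt_12 {K : Type*} [Field K] [Infinite K] [CharZero K] {n : ℕ}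
    (m b : ℕ) (hm : m ≤ n) (g : MvPolynomial (Fin n) K)
    (hg : ∀ p : Fin n → K, (∀ i : Fin n, i.val < m → p i = 0) →
      g ∈ vanishingIdeal p ^ b) :
    g ∈ centerIdeal K n m ^ b := by
  classical
  refine mem_centerIdeal_pow_of_wt fun d hd => ?_
  by_contra hlt
  push_neg at hlt
  set β := d.filter (fun i => i.val < m) with hβ
  set τ := d.filter (fun i => ¬ i.val < m) with hτ
  set F : MvPolynomial (Fin n) K :=
    ∑ e ∈ g.support, if e.filter (fun i => i.val < m) = β
      then MvPolynomial.monomial (e.filter fun i => ¬ i.val < m) (MvPolynomial.coeff e g)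
      else 0 with hF
  have hFzero : ∀ q : Fin n → K, MvPolynomial.eval q F = 0 := by
    intro q
    set p : Fin n → K := fun i => if i.val < m then 0 else q i with hp
    have hmem := hg p (fun i hi => by simp [hp, hi])
    set φ := MvPolynomial.aeval (R := K)
        (fun i : Fin n => if i.val < m then MvPolynomial.X i else MvPolynomial.C (q i)) with hφdef
    have hψφ : ∀ x : MvPolynomial (Fin n) K,
        (MvPolynomial.aeval (R := K)
            (fun i : Fin n => if i.val < m then 0 else MvPolynomial.X i)) (φ x)
          = MvPolynomial.C (MvPolynomial.eval p x) := by
      intro x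
      have hcomp : ((MvPolynomial.aeval (R := K)
            (fun i : Fin n => if i.val < m then 0 else MvPolynomial.X i)).toRingHom.comp
            φ.toRingHom)
          = (MvPolynomial.C (σ := Fin n)).comp (MvPolynomial.eval p) := by
        apply MvPolynomial.ringHom_ext
        · intro r
          simp [hφdef]
        · intro i
          simp only [RingHom.coe_comp, Function.comp_apply, AlgHom.toRingHom_eq_coe,
            RingHom.coe_coe, MvPolynomial.eval_X]
          by_cases hi : i.val < m <;> simp [hφdef, hp, hi]
      exact RingHom.congr_fun hcomp x
    have hmap1 : ∀ x ∈ vanishingIdeal p, φ x ∈ wtIdeal K n m 1 := by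
      intro x hx
      have hx0 : MvPolynomial.eval p x = 0 := by
        unfold vanishingIdeal at hx
        exact RingHom.mem_ker.1 hx
      refine mem_wtIdeal.2 fun d' hd' => ?_
      by_contra h0
      have hw0 : wt m d' = 0 := by omega
      have hc := coeff_aeval_zero m (φ x) d' hw0
      rw [hψφ x, hx0, map_zero, MvPolynomial.coeff_zero] at hc
      exact MvPolynomial.mem_support_iff.1 hd' hc.symm
    have hφg : φ g ∈ wtIdeal K n m b := by
      have h1 : Ideal.map φ (vanishingIdeal p ^ b) ≤ wtIdeal K n m b := by
        rw [Ideal.map_pow]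
        refine le_trans (Ideal.pow_right_mono ?_ b) (wtIdeal_pow_le K n m b)
        rw [Ideal.map_le_iff_le_comap]
        exact fun x hx => hmap1 x hx
      exact h1 (Ideal.mem_map_of_mem φ hmem)
    have hcoeff : MvPolynomial.eval q F = MvPolynomial.coeff β (φ g) := by
      conv_rhs => rw [← MvPolynomial.support_sum_monomial_coeff g]
      rw [hF, map_sum, map_sum φ, MvPolynomial.coeff_sum]
      refine Finset.sum_congr rfl fun e he => ?_
      rw [hφdef, aeval_partial_monomial m q e, MvPolynomial.coeff_monomial]
      by_cases hme : e.filter (fun i => i.val < m) = β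
      · rw [if_pos hme, if_pos hme, MvPolynomial.eval_monomial, MvPolynomial.eval_monomial,
          one_mul]
      · rw [if_neg hme, if_neg hme, map_zero]
    have hwβ : wt m β < b := by rw [hβ, wt_filter]; exact hlt
    have hns : β ∉ (φ g).support := fun hmem' =>
      absurd (mem_wtIdeal.1 hφg β hmem') (by omega)
    rw [hcoeff, MvPolynomial.notMem_support_iff.1 hns]
  have hF0 : F = 0 := MvPolynomial.funext (fun x => by rw [hFzero x, map_zero])
  have hcτ : MvPolynomial.coeff τ F = MvPolynomial.coeff d g := by
    rw [hF, MvPolynomial.coeff_sum]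
    have hterm : ∀ e ∈ g.support,
        MvPolynomial.coeff τ (if e.filter (fun i => i.val < m) = β
          then MvPolynomial.monomial (e.filter fun i => ¬ i.val < m) (MvPolynomial.coeff e g)
          else 0)
        = if e = d then MvPolynomial.coeff e g else 0 := by
      intro e _
      by_cases hme : e.filter (fun i => i.val < m) = β
      · rw [if_pos hme, MvPolynomial.coeff_monomial]
        by_cases hte : e.filter (fun i => ¬ i.val < m) = τ
        · rw [if_pos hte, if_pos]
          have he1 := Finsupp.filter_pos_add_filter_neg e (fun i : Fin n => i.val < m)
          have hd1 := Finsupp.filter_pos_add_filter_neg d (fun i : Fin n => i.val < m)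
          rw [← he1, hme, hte, hβ, hτ, hd1]
        · rw [if_neg hte, if_neg]
          rintro rfl
          exact hte rfl
      · rw [if_neg hme, MvPolynomial.coeff_zero, if_neg]
        rintro rfl
        exact hme rfl
    rw [Finset.sum_congr rfl hterm, Finset.sum_ite_eq' g.support d, if_pos hd]
  rw [hF0, MvPolynomial.coeff_zero] at hcτ
  exact MvPolynomial.mem_support_iff.1 hd hcτ.symm
end

section
/- Let K be a field of characteristic zero, m ≤ n, 1 ≤ k ≤ m, and b ≥ 1. Let g ∈ K[x₁,…,xₙ] satisfy g ∈ ⟨x₁,…,x_m⟩^b and ord₀(g) = b (order exactly b at the origin). Let g' ∈ K[x₁,…,xₙ] be the controlled transform in chart k, i.e. the polynomial with x_k^b·g' = φ_k(g). Then for every point q ∈ Kⁿ lying on the exceptional divisor over the origin, i.e. with q_k = 0 and q_j = 0 for all j > m, one has ord_q(g') ≤ b. (The maxorder does not increase under blowup of a center at whose points the order equals the maxorder; this is the key inequality o' ≤ o in the paper's Lemma on transforms of tight gallimaufries.) -/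
namespace MvPolynomial
section CommSemiring

variable {σ τ R S : Type*} [CommSemiring R] [CommSemiring S] [Algebra R S]

theorem coeff_aeval_C_mul_X (w : σ → S) (f : MvPolynomial σ R) (d : ℕ) :
    (aeval (fun i => Polynomial.C (w i) * Polynomial.X) f).coeff d =
      aeval w (homogeneousComponent d f) := by
  classical
  induction f using induction_on' with
  | monomial α r =>
    rw [homogeneousComponent_of_mem (isHomogeneous_monomial r rfl)]
    simp only [aeval_monomial, Finsupp.prod, mul_pow, Finset.prod_mul_distrib,
      ← map_pow, ← map_prod, Finset.prod_pow_eq_pow_sum, Polynomial.algebraMap_apply,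
      ← mul_assoc, ← Polynomial.C_mul, Polynomial.coeff_C_mul_X_pow, ← Finsupp.degree_apply]
    split_ifs <;> simp [aeval_monomial, Finsupp.prod]
  | add p q hp hq => simp only [map_add, Polynomial.coeff_add, hp, hq]

theorem IsHomogeneous.aeval_C_mul_X {F : MvPolynomial σ R} {b : ℕ} (hF : F.IsHomogeneous b)
    (w : σ → S) :
    MvPolynomial.aeval (fun i => Polynomial.C (w i) * Polynomial.X) F =
      Polynomial.C (MvPolynomial.aeval w F) * Polynomial.X ^ b := by
  ext d
  rw [coeff_aeval_C_mul_X, homogeneousComponent_of_mem hF, Polynomial.coeff_C_mul_X_pow]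
  split_ifs <;> simp_all [eq_comm]

theorem IsHomogeneous.aeval_smul {F : MvPolynomial σ R} {b : ℕ} (hF : F.IsHomogeneous b)
    (c : S) (w : σ → S) : MvPolynomial.aeval (c • w) F = c ^ b * MvPolynomial.aeval w F := by
  have h := congrArg (Polynomial.aeval c) (hF.aeval_C_mul_X w)
  rw [← AlgHom.restrictScalars_apply R, comp_aeval_apply] at h
  simp only [AlgHom.restrictScalars_apply, map_mul, map_pow, Polynomial.aeval_C,
    Polynomial.aeval_X, Algebra.algebraMap_self, RingHom.id_apply] at h
  rw [mul_comm, ← h]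
  congr 2
  funext i
  exact mul_comm _ _

theorem totalDegree_aeval_le {d : σ → MvPolynomial τ R} (hd : ∀ i, (d i).totalDegree ≤ 1)
    (f : MvPolynomial σ R) : (aeval d f).totalDegree ≤ f.totalDegree := by
  conv_lhs => rw [f.as_sum, map_sum]
  refine totalDegree_finsetSum_le fun α hα => ?_
  rw [aeval_monomial, algebraMap_eq, ← smul_eq_C_mul]
  refine (totalDegree_smul_le _ _).trans ((totalDegree_finsetProd _ _).trans ?_)
  calc ∑ i ∈ α.support, (d i ^ α i).totalDegree ≤ ∑ i ∈ α.support, α i :=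
        Finset.sum_le_sum fun i _ =>
          (totalDegree_pow _ _).trans (by simpa using Nat.mul_le_mul_left (α i) (hd i))
    _ ≤ f.totalDegree := le_totalDegree hα

theorem le_totalDegree_of_mem_pow_idealOfVars {f : MvPolynomial σ R} {j : ℕ}
    (h : f ∈ idealOfVars σ R ^ j) (hf : f ≠ 0) : j ≤ f.totalDegree := by
  obtain ⟨α, hα⟩ := support_nonempty.2 hf
  exact ((mem_pow_idealOfVars_iff j f).1 h α hα).trans (le_totalDegree hα)

theorem homogeneousComponent_ne_zero_of_mem_pow_idealOfVars {f : MvPolynomial σ R} {b : ℕ}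
    (h : f ∈ idealOfVars σ R ^ b) (h' : f ∉ idealOfVars σ R ^ (b + 1)) :
    homogeneousComponent b f ≠ 0 := by
  classical
  intro h0
  refine h' ((mem_pow_idealOfVars_iff' _ f).2 fun α hα => ?_)
  rcases (Nat.lt_succ_iff.1 hα).lt_or_eq with hlt | rfl
  · exact (mem_pow_idealOfVars_iff' _ f).1 h α hlt
  · simpa [coeff_homogeneousComponent] using congrArg (coeff α) h0

theorem totalDegree_aeval_update_X_one_le [DecidableEq σ] (k : σ) (f : MvPolynomial σ R) :
    (MvPolynomial.aeval (Function.update (X : σ → MvPolynomial σ R) k 1) f).totalDegree ≤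
      f.totalDegree :=
  totalDegree_aeval_le (fun i => by
    rcases eq_or_ne i k with rfl | hi
    · simp
    · simpa [hi, X] using totalDegree_monomial_le (Finsupp.single i 1) (1 : R)) f

end CommSemiring

theorem IsHomogeneous.aeval_update_X_one_ne_zero {σ R : Type*} [CommRing R] [IsDomain R]
    [DecidableEq σ] {F : MvPolynomial σ R} {b : ℕ} (hF : F.IsHomogeneous b) (hF0 : F ≠ 0)
    (k : σ) : MvPolynomial.aeval (Function.update (X : σ → MvPolynomial σ R) k 1) F ≠ 0 := by
  let ι := IsScalarTower.toAlgHom R (MvPolynomial σ R) (FractionRing (MvPolynomial σ R))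
  have hι : Function.Injective ι := IsFractionRing.injective _ _
  have hX : ι (X k) ≠ 0 := (map_ne_zero_iff _ hι).2 (X_ne_zero k)
  -- `ρ` sends `x_i ↦ x_i / x_k`, which turns `F(w)` into `x_k⁻ᵇ • F`.
  set ρ : MvPolynomial σ R →ₐ[R] FractionRing (MvPolynomial σ R) :=
    MvPolynomial.aeval ((ι (X k))⁻¹ • fun i => ι (X i))
  have hρ : (fun i => ρ (Function.update X k 1 i)) = (ι (X k))⁻¹ • fun i => ι (X i) := by
    funext i
    rcases eq_or_ne i k with rfl | hi
    · simp [ρ, hX]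
    · simp [ρ, hi]
  intro h0
  have h := congrArg ρ h0
  rw [comp_aeval_apply, hρ, hF.aeval_smul, ← comp_aeval_apply, aeval_X_left_apply, map_zero] at h
  exact hF0 (hι (by simpa [hX] using h))

end MvPolynomial

section VanishingIdeal

open MvPolynomial (X C aeval eval idealOfVars)

variable {K : Type*} [Field K] {n : ℕ}

theorem vanishingIdeal_zero : vanishingIdeal (0 : Fin n → K) = idealOfVars (Fin n) K := by
  ext f
  rw [← pow_one (idealOfVars _ _), MvPolynomial.mem_pow_idealOfVars_iff', vanishingIdeal,
    RingHom.mem_ker, MvPolynomial.eval_zero]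
  simp [Finsupp.degree_eq_zero_iff, MvPolynomial.constantCoeff_eq]

theorem aeval_mem_vanishingIdeal_pow {p p' : Fin n → K} (d : Fin n → MvPolynomial (Fin n) K)
    (hd : ∀ i, eval p' (d i) = p i) {f : MvPolynomial (Fin n) K} {j : ℕ}
    (hf : f ∈ vanishingIdeal p ^ j) : aeval d f ∈ vanishingIdeal p' ^ j := by
  have hle : vanishingIdeal p ≤ (vanishingIdeal p').comap (aeval d) := fun g hg => by
    change aeval p' (aeval d g) = 0
    rw [MvPolynomial.comp_aeval_apply]
    change eval (fun i => eval p' (d i)) g = 0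
    simpa only [hd] using RingHom.mem_ker.1 hg
  exact Ideal.le_comap_pow _ j (Ideal.pow_right_mono hle j hf)

theorem le_totalDegree_of_mem_vanishingIdeal_pow {q : Fin n → K} {f : MvPolynomial (Fin n) K}
    {j : ℕ} (h : f ∈ vanishingIdeal q ^ j) (hf : f ≠ 0) : j ≤ f.totalDegree := by
  let translate : MvPolynomial (Fin n) K →ₐ[K] MvPolynomial (Fin n) K :=
    aeval fun i => X i + C (q i)
  have hinv : (aeval fun i => X i - C (q i)).comp translate = AlgHom.id K _ := by
    ext i
    simp [translate]
  have hmem : translate f ∈ idealOfVars (Fin n) K ^ j := by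
    rw [← vanishingIdeal_zero]
    exact aeval_mem_vanishingIdeal_pow _ (fun i => by simp) h
  have hne : translate f ≠ 0 := fun h0 => hf <| by
    simpa [h0] using (AlgHom.congr_fun hinv f).symm
  refine (MvPolynomial.le_totalDegree_of_mem_pow_idealOfVars hmem hne).trans
    (MvPolynomial.totalDegree_aeval_le (fun i => ?_) f)
  exact (MvPolynomial.totalDegree_add _ _).trans
    (by simp [MvPolynomial.totalDegree_X, MvPolynomial.totalDegree_C])

end VanishingIdeal

section Blowup

open MvPolynomial (X C aeval eval homogeneousComponent)

variable {K : Type*} [Field K] {n : ℕ}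

theorem aeval_eq_aeval_update_X_one_homogeneousComponent {m b : ℕ} {k : Fin n}
    {g g' : MvPolynomial (Fin n) K} (hg' : X k ^ b * g' = blowupChart m k g) :
    aeval (fun i => if i.val < m ∧ i ≠ k then X i else 0) g' =
      aeval (Function.update (X : Fin n → MvPolynomial (Fin n) K) k 1)
        (homogeneousComponent b g) := by
  set w : Fin n → MvPolynomial (Fin n) K := Function.update X k 1
  let ψ : MvPolynomial (Fin n) K →ₐ[K] Polynomial (MvPolynomial (Fin n) K) :=
    aeval fun i =>
      if i.val < m ∧ i ≠ k then Polynomial.C (X i) else Polynomial.C (w i) * Polynomial.X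
  have hψk : ψ (X k) = Polynomial.X := by simp [ψ, w]
  have hψφ : ψ.comp (blowupChart m k) = aeval fun i => Polynomial.C (w i) * Polynomial.X := by
    ext i : 1
    by_cases hi : i.val < m ∧ i ≠ k
    · have hwi : w i = X i := Function.update_of_ne hi.2 _ _
      simp only [AlgHom.comp_apply, blowupChart, MvPolynomial.aeval_X, if_pos hi, map_mul, hψk,
        hwi]
      rw [mul_comm]
      congr 1
      exact (MvPolynomial.aeval_X _ i).trans (if_pos hi)
    · simp [blowupChart, hi, ψ]
  have h := congrArg (fun p => (ψ p).coeff b) hg'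
  simp only [map_mul, map_pow, hψk, Polynomial.coeff_X_pow_mul', le_refl, if_true,
    Nat.sub_self] at h
  rw [← AlgHom.comp_apply, hψφ, MvPolynomial.coeff_aeval_C_mul_X] at h
  rw [← h, Polynomial.coeff_zero_eq_eval_zero, ← Polynomial.coe_aeval_eq_eval,
    ← AlgHom.restrictScalars_apply K (Polynomial.aeval 0), MvPolynomial.comp_aeval_apply]
  congr 2
  funext i
  split_ifs <;> simp [*]

end Blowup

theorem stmt_13_general {K : Type*} [Field K] {n : ℕ} (m : ℕ) (k : Fin n)
    (b : ℕ) (g g' : MvPolynomial (Fin n) K)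
    (hord : g ∈ vanishingIdeal (0 : Fin n → K) ^ b)
    (hord' : g ∉ vanishingIdeal (0 : Fin n → K) ^ (b + 1))
    (hg' : (MvPolynomial.X k : MvPolynomial (Fin n) K) ^ b * g' = blowupChart m k g)
    (q : Fin n → K) (hqk : q k = 0) (hqj : ∀ j : Fin n, m ≤ j.val → q j = 0) :
    g' ∉ vanishingIdeal q ^ (b + 1) := by
  intro hmem
  rw [vanishingIdeal_zero] at hord hord'
  have hF : (MvPolynomial.homogeneousComponent b g).IsHomogeneous b :=
    MvPolynomial.homogeneousComponent_isHomogeneous b g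
  have hF0 := MvPolynomial.homogeneousComponent_ne_zero_of_mem_pow_idealOfVars hord hord'
  have hfiber :
      ∀ i, MvPolynomial.eval q (if i.val < m ∧ i ≠ k then MvPolynomial.X i else 0) = q i := by
    intro i
    split_ifs with hi
    · simp
    · rcases not_and_or.1 hi with him | hik
      · exact (hqj i (not_lt.1 him)).symm
      · rw [not_ne_iff.1 hik, hqk, map_zero]
  have hmem' := aeval_mem_vanishingIdeal_pow _ hfiber hmem
  rw [aeval_eq_aeval_update_X_one_homogeneousComponent hg'] at hmem'
  have hlow :=
    le_totalDegree_of_mem_vanishingIdeal_pow hmem' (hF.aeval_update_X_one_ne_zero hF0 k)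
  have hup := (MvPolynomial.totalDegree_aeval_update_X_one_le k _).trans hF.totalDegree_le
  omega

/-- Let `g ∈ ⟨x₁,…,x_m⟩^b` have order exactly `b` at the origin
(`g ∈ m₀^b`, `g ∉ m₀^{b+1}`), and let `g'` be its controlled transform in chart `k`,
i.e. `x_k^b·g' = φ_k(g)`.  Then at every point `q` of the exceptional divisor lying
over the origin (`q_k = 0` and `q_j = 0` for all `j > m`) one has `ord_q(g') ≤ b`,
i.e. `g' ∉ m_q^{b+1}`: the maxorder does not increase under blowup. -/
theorem stmt_13 {K : Type*} [Field K] [CharZero K] {n : ℕ} (m : ℕ) (k : Fin n)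
    (b : ℕ) (hm : m ≤ n) (hk : k.val < m) (hb : 1 ≤ b)
    (g g' : MvPolynomial (Fin n) K)
    (hgc : g ∈ centerIdeal K n m ^ b)
    (hord : g ∈ vanishingIdeal (0 : Fin n → K) ^ b)
    (hord' : g ∉ vanishingIdeal (0 : Fin n → K) ^ (b + 1))
    (hg' : (MvPolynomial.X k : MvPolynomial (Fin n) K) ^ b * g' = blowupChart m k g)
    (q : Fin n → K) (hqk : q k = 0) (hqj : ∀ j : Fin n, m ≤ j.val → q j = 0) :
    g' ∉ vanishingIdeal q ^ (b + 1) :=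
  stmt_13_general m k b g g' hord hord' hg' q hqk hqj
end

section
/- Fix a positive integer b. Consider pairs (Ξ, a) where Ξ is a finite abstract simplicial complex with vertices in ℕ (a finite collection of finite nonempty subsets of ℕ closed under passing to nonempty subsets) and a assigns to each vertex a label in {j/b : j ∈ ℕ}. A monomial blowup move at (Ξ, a) chooses a face F ∈ Ξ that is minimal under inclusion among all faces whose label sum ∑_{i∈F} a(i) is ≥ 1, chooses a vertex v not occurring in Ξ, and produces (Ξ', a') where: Ξ' consists of all faces G ∈ Ξ with F ⊄ G, together with all sets G ∪ {v} where G is a (possibly empty) set with F ⊄ G and G ∪ F ∈ Ξ; and a' agrees with a on old vertices and a'(v) = (∑_{i∈F} a(i)) − 1. Then there is no infinite sequence (Ξ₀,a₀), (Ξ₁,a₁), … in which each (Ξ_{t+1}, a_{t+1}) is obtained from (Ξ_t, a_t) by a monomial blowup move; i.e., the strategy of repeatedly blowing up a minimal face with label sum ≥ 1 terminates, ending with a complex having no face of label sum ≥ 1. -/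
/-- A finite abstract simplicial complex with vertices in `ℕ`: a finite collection of
finite nonempty subsets of `ℕ` closed under passing to nonempty subsets. -/
def IsSimplicialComplex (Ξ : Finset (Finset ℕ)) : Prop :=
  ∀ F ∈ Ξ, F.Nonempty ∧ ∀ G : Finset ℕ, G ⊆ F → G.Nonempty → G ∈ Ξ

/-- A monomial blowup move from the labelled complex `st = (Ξ, a)` to `st' = (Ξ', a')`:
choose a face `F ∈ Ξ` minimal under inclusion among the faces of label sum `≥ 1`,
and a vertex `v` not occurring in `Ξ`; then `Ξ'` consists of all faces `G ∈ Ξ` with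
`F ⊄ G` together with all sets `G ∪ {v}` where `G` is a (possibly empty) set with
`F ⊄ G` and `G ∪ F ∈ Ξ`, and `a'` agrees with `a` on old vertices while
`a'(v) = (∑_{i∈F} a(i)) − 1`. -/
def MonomialMove (st st' : Finset (Finset ℕ) × (ℕ → ℚ)) : Prop :=
  ∃ F ∈ st.1, ∃ v : ℕ,
    (1 ≤ ∑ i ∈ F, st.2 i) ∧
    (∀ G ∈ st.1, (1 ≤ ∑ i ∈ G, st.2 i) → ¬ G ⊂ F) ∧
    (∀ G ∈ st.1, v ∉ G) ∧
    ((st'.1 : Set (Finset ℕ)) =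
      {G | G ∈ st.1 ∧ ¬ F ⊆ G} ∪
      {H | ∃ G : Finset ℕ, ¬ F ⊆ G ∧ G ∪ F ∈ st.1 ∧ H = insert v G}) ∧
    st'.2 = Function.update st.2 v ((∑ i ∈ F, st.2 i) - 1)

def GoodSt (b : ℕ) (st : Finset (Finset ℕ) × (ℕ → ℚ)) : Prop :=
  IsSimplicialComplex st.1 ∧ ∀ G ∈ st.1, ∀ i ∈ G, ∃ j : ℕ, st.2 i = (j : ℚ) / (b : ℚ)

lemma natsum {b : ℕ} (hb : 0 < b) {a : ℕ → ℚ} {G : Finset ℕ}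
    (h : ∀ i ∈ G, ∃ j : ℕ, a i = (j : ℚ) / (b : ℚ)) :
    ∃ n : ℕ, (b : ℚ) * ∑ i ∈ G, a i = (n : ℚ) := by
  classical
  have hbne : (b : ℚ) ≠ 0 := by positivity
  induction G using Finset.induction with
  | empty => exact ⟨0, by simp⟩
  | @insert x s hx ih =>
    obtain ⟨jx, hjx⟩ := h _ (Finset.mem_insert_self _ _)
    obtain ⟨n, hn⟩ := ih (fun i hi => h i (Finset.mem_insert_of_mem hi))
    refine ⟨jx + n, ?_⟩
    rw [Finset.sum_insert hx, mul_add, hn, hjx]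
    push_cast
    field_simp

open Multiset Relation in
/-- Dershowitz–Manna style step implies `TransGen (CutExpand r)`. -/
lemma dm_transGen {α : Type*} {r : α → α → Prop} :
    ∀ (X : Multiset α), X ≠ 0 → ∀ (Y Z : Multiset α), (∀ y ∈ Y, ∃ x ∈ X, r y x) →
      Relation.TransGen (Relation.CutExpand r) (Z + Y) (Z + X) := by
  classical
  intro X
  induction X using Multiset.induction with
  | empty => intro h; exact absurd rfl h
  | cons a X ih =>
    intro _ Y Z hY
    set Y₁ := Y.filter (fun y => r y a) with hY₁
    set Y₂ := Y.filter (fun y => ¬ r y a) with hY₂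
    have hsplit : Y₁ + Y₂ = Y := Multiset.filter_add_not _ Y
    have hY₂w : ∀ y ∈ Y₂, ∃ x ∈ X, r y x := by
      intro y hy
      have hy' : y ∈ Y ∧ ¬ r y a := by simpa [hY₂] using hy
      obtain ⟨x, hx, hrx⟩ := hY y hy'.1
      rcases Multiset.mem_cons.1 hx with rfl | hx
      · exact absurd hrx hy'.2
      · exact ⟨x, hx, hrx⟩
    have hY₁w : ∀ y ∈ Y₁, r y a := by
      intro y hy; exact (Multiset.mem_filter.1 hy).2
    by_cases hX0 : X = 0
    · subst hX0
      have hY₂0 : Y₂ = 0 := by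
        rw [Multiset.eq_zero_iff_forall_notMem]
        intro y hy
        obtain ⟨x, hx, _⟩ := hY₂w y hy
        exact absurd hx (Multiset.notMem_zero x)
      have hYeq : Y = Y₁ := by rw [← hsplit, hY₂0, add_zero]
      refine Relation.TransGen.single ?_
      refine ⟨Y₁, a, hY₁w, ?_⟩
      rw [hYeq]
      rw [show (a ::ₘ (0:Multiset α)) = {a} by simp]
      rw [add_assoc, add_comm Y₁ {a}, ← add_assoc]
    · have step : Relation.CutExpand r (Z + Y₁ + X) (Z + (a ::ₘ X)) := by
        refine ⟨Y₁, a, hY₁w, ?_⟩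
        rw [← Multiset.singleton_add a X]
        rw [add_assoc (Z + Y₁) X {a}, add_comm X {a}]
        rw [add_assoc Z ({a} + X) Y₁, add_comm ({a} + X) Y₁, ← add_assoc]
        rw [add_assoc (Z + Y₁) {a} X, add_assoc]
      have tail := ih hX0 Y₂ (Z + Y₁) hY₂w
      have : Z + Y₁ + Y₂ = Z + Y := by rw [add_assoc, hsplit]
      rw [this] at tail
      exact Relation.TransGen.tail tail step


noncomputable def gMeasure (b : ℕ) (st : Finset (Finset ℕ) × (ℕ → ℚ)) : Multiset ℕ :=
  st.1.val.map (fun G => ⌊(b : ℚ) * ∑ i ∈ G, st.2 i⌋₊)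

lemma move_step {b : ℕ} (hb : 0 < b) {st st' : Finset (Finset ℕ) × (ℕ → ℚ)}
    (hg : GoodSt b st) (hm : MonomialMove st st') :
    GoodSt b st' ∧ Relation.TransGen (Relation.CutExpand ((· < ·) : ℕ → ℕ → Prop))
      (gMeasure b st') (gMeasure b st) := by
  classical
  obtain ⟨F, hF, v, hs, hmin, hfresh, hset, ha'⟩ := hm
  obtain ⟨hcx, hlab⟩ := hg
  have hbne : (b : ℚ) ≠ 0 := by positivity
  have hbpos : (0 : ℚ) < b := by exact_mod_cast hb
  have hmem : ∀ H : Finset ℕ, H ∈ st'.1 ↔ (H ∈ st.1 ∧ ¬ F ⊆ H) ∨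
      (∃ G : Finset ℕ, ¬ F ⊆ G ∧ G ∪ F ∈ st.1 ∧ H = insert v G) := by
    intro H
    have := Set.ext_iff.1 hset H
    simpa using this
  have hvF : v ∉ F := hfresh F hF
  have hFne : F.Nonempty := (hcx F hF).1
  have hsubF : ∀ G : Finset ℕ, G ⊆ F → G.Nonempty → G ∈ st.1 := (hcx F hF).2
  -- proper nonempty subsets of F have label sum < 1
  have hproper : ∀ G : Finset ℕ, G ⊆ F → G ≠ F → G.Nonempty →
      ∑ i ∈ G, st.2 i < 1 := by
    intro G hGF hne hGne
    by_contra h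
    exact hmin G (hsubF G hGF hGne) (le_of_not_gt h) (hGF.ssubset_of_ne hne)
  have hupd : ∀ i : ℕ, i ≠ v → st'.2 i = st.2 i := by
    intro i hi
    rw [ha']; exact Function.update_of_ne hi _ _
  have hupdv : st'.2 v = (∑ i ∈ F, st.2 i) - 1 := by
    rw [ha']; exact Function.update_self _ _ _
  have hsumold : ∀ H : Finset ℕ, v ∉ H → ∑ i ∈ H, st'.2 i = ∑ i ∈ H, st.2 i := by
    intro H hv
    exact Finset.sum_congr rfl fun i hi => hupd i (fun h => hv (h ▸ hi))
  -- Part 1: GoodSt st'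
  have hgood' : GoodSt b st' := by
    constructor
    · -- simplicial complex
      intro H hH
      rcases (hmem H).1 hH with ⟨hHΞ, hnFH⟩ | ⟨G, hnFG, hGFmem, rfl⟩
      · refine ⟨(hcx H hHΞ).1, fun G hGH hGne => ?_⟩
        exact (hmem G).2 (Or.inl ⟨(hcx H hHΞ).2 G hGH hGne,
          fun h => hnFH (h.trans hGH)⟩)
      · have hvGF : v ∉ G ∪ F := hfresh _ hGFmem
        have hvG : v ∉ G := fun h => hvGF (Finset.mem_union_left _ h)
        refine ⟨⟨v, Finset.mem_insert_self _ _⟩, fun H' hH' hH'ne => ?_⟩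
        by_cases hv : v ∈ H'
        · refine (hmem H').2 (Or.inr ⟨H'.erase v, ?_, ?_, (Finset.insert_erase hv).symm⟩)
          · intro hFe
            have : H'.erase v ⊆ G := by
              have h1 : H'.erase v ⊆ (insert v G).erase v := Finset.erase_subset_erase v hH'
              rwa [Finset.erase_insert hvG] at h1
            exact hnFG (hFe.trans this)
          · have h1 : H'.erase v ⊆ (insert v G).erase v := Finset.erase_subset_erase v hH'
            rw [Finset.erase_insert hvG] at h1
            exact (hcx _ hGFmem).2 _ (Finset.union_subset_union_left h1)
              ⟨hFne.choose, Finset.mem_union_right _ hFne.choose_spec⟩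
        · have hH'G : H' ⊆ G := by
            intro i hi
            rcases Finset.mem_insert.1 (hH' hi) with rfl | h
            · exact absurd hi hv
            · exact h
          refine (hmem H').2 (Or.inl ⟨?_, fun h => hnFG (h.trans hH'G)⟩)
          exact (hcx _ hGFmem).2 H' (hH'G.trans Finset.subset_union_left) hH'ne
    · -- labels
      intro H hH i hi
      rcases (hmem H).1 hH with ⟨hHΞ, _⟩ | ⟨G, hnFG, hGFmem, rfl⟩
      · have hiv : i ≠ v := fun h => hfresh H hHΞ (h ▸ hi)
        rw [hupd i hiv]; exact hlab H hHΞ i hi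
      · have hvGF : v ∉ G ∪ F := hfresh _ hGFmem
        rcases Finset.mem_insert.1 hi with rfl | hiG
        · -- the new vertex
          obtain ⟨J, hJ⟩ := natsum hb (hlab F hF)
          have hJb : b ≤ J := by
            have : (b : ℚ) ≤ (J : ℚ) := by
              rw [← hJ]
              calc (b : ℚ) = b * 1 := by ring
              _ ≤ b * ∑ i ∈ F, st.2 i := by
                  exact mul_le_mul_of_nonneg_left hs (le_of_lt hbpos)
            exact_mod_cast this
          refine ⟨J - b, ?_⟩
          rw [hupdv]
          have hsF : ∑ i ∈ F, st.2 i = (J : ℚ) / b := by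
            field_simp
            linarith [hJ]
          rw [hsF]
          rw [Nat.cast_sub hJb]
          field_simp
        · have hiv : i ≠ v := fun h => hvGF (h ▸ Finset.mem_union_left _ hiG)
          rw [hupd i hiv]
          exact hlab _ hGFmem i (Finset.mem_union_left _ hiG)
  refine ⟨hgood', ?_⟩
  -- Part 2: the measure decreases
  set f : Finset ℕ → ℕ := fun G => ⌊(b : ℚ) * ∑ i ∈ G, st.2 i⌋₊ with hf
  set f' : Finset ℕ → ℕ := fun G => ⌊(b : ℚ) * ∑ i ∈ G, st'.2 i⌋₊ with hf'
  set C : Multiset (Finset ℕ) := st.1.val.filter (fun G => F ⊆ G) with hC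
  set A : Multiset (Finset ℕ) := st.1.val.filter (fun G => ¬ F ⊆ G) with hA
  set B : Multiset (Finset ℕ) := st'.1.val.filter (fun H => v ∈ H) with hB
  set A' : Multiset (Finset ℕ) := st'.1.val.filter (fun H => v ∉ H) with hA'
  have hsplit : C + A = st.1.val := Multiset.filter_add_not _ _
  have hsplit' : B + A' = st'.1.val := Multiset.filter_add_not _ _
  have hAA' : A' = A := by
    have hfin : st'.1.filter (fun H => v ∉ H) = st.1.filter (fun G => ¬ F ⊆ G) := by
      ext H
      simp only [Finset.mem_filter]
      constructor
      · rintro ⟨hH, hv⟩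
        rcases (hmem H).1 hH with ⟨h1, h2⟩ | ⟨G, _, _, rfl⟩
        · exact ⟨h1, h2⟩
        · exact absurd (Finset.mem_insert_self v G) hv
      · rintro ⟨hH, hnF⟩
        exact ⟨(hmem H).2 (Or.inl ⟨hH, hnF⟩), hfresh H hH⟩
    have := congrArg Finset.val hfin
    simpa [Finset.filter_val] using this
  have hmapA : A.map f' = A.map f := by
    refine Multiset.map_congr rfl fun H hH => ?_
    have hHΞ : H ∈ st.1 := Multiset.mem_filter.1 hH |>.1
    simp only [hf, hf']
    rw [hsumold H (hfresh H hHΞ)]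
  have hmeas : gMeasure b st = A.map f + C.map f := by
    rw [gMeasure, ← hsplit, Multiset.map_add, add_comm]
  have hmeas' : gMeasure b st' = A.map f + B.map f' := by
    rw [gMeasure, ← hsplit', Multiset.map_add, hAA', hmapA, add_comm]
  rw [hmeas, hmeas']
  refine dm_transGen _ ?_ _ _ ?_
  · -- C.map f ≠ 0
    intro h
    have : F ∈ C := Multiset.mem_filter.2 ⟨hF, subset_rfl⟩
    have : f F ∈ C.map f := Multiset.mem_map_of_mem f this
    rw [h] at this
    exact Multiset.notMem_zero _ this
  · -- every new value is smaller than some removed value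
    intro y hy
    obtain ⟨H, hH, rfl⟩ := Multiset.mem_map.1 hy
    have hHmem : H ∈ st'.1 := (Multiset.mem_filter.1 hH).1
    have hvH : v ∈ H := (Multiset.mem_filter.1 hH).2
    rcases (hmem H).1 hHmem with ⟨hHΞ, _⟩ | ⟨G, hnFG, hGFmem, rfl⟩
    · exact absurd hvH (hfresh H hHΞ)
    have hvGF : v ∉ G ∪ F := hfresh _ hGFmem
    have hvG : v ∉ G := fun h => hvGF (Finset.mem_union_left _ h)
    refine ⟨f (G ∪ F), Multiset.mem_map_of_mem f
      (Multiset.mem_filter.2 ⟨hGFmem, Finset.subset_union_right⟩), ?_⟩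
    -- now show the floor inequality
    obtain ⟨m, hm⟩ := natsum hb (hgood'.2 _ hHmem)
    obtain ⟨n, hn⟩ := natsum hb (hlab _ hGFmem)
    have hwlt : ∑ i ∈ F ∩ G, st.2 i < 1 := by
      rcases (F ∩ G).eq_empty_or_nonempty with he | hne
      · rw [he]; simp
      · refine hproper _ Finset.inter_subset_left ?_ hne
        intro hEq
        exact hnFG (hEq ▸ Finset.inter_subset_right : F ⊆ G)
    have hsum_split : ∑ i ∈ F ∩ G, st.2 i + ∑ i ∈ F \ G, st.2 i = ∑ i ∈ F, st.2 i :=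
      Finset.sum_inter_add_sum_sdiff F G _
    have hGF_sum : ∑ i ∈ G ∪ F, st.2 i = ∑ i ∈ G, st.2 i + ∑ i ∈ F \ G, st.2 i := by
      rw [← Finset.union_sdiff_self_eq_union, Finset.sum_union Finset.disjoint_sdiff]
    have hH_sum : ∑ i ∈ insert v G, st'.2 i
        = (∑ i ∈ F, st.2 i - 1) + ∑ i ∈ G, st.2 i := by
      rw [Finset.sum_insert hvG, hupdv, hsumold G hvG]
    have hqlt : (b : ℚ) * ∑ i ∈ insert v G, st'.2 i < (b : ℚ) * ∑ i ∈ G ∪ F, st.2 i := by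
      rw [hH_sum, hGF_sum]
      have : (∑ i ∈ F, st.2 i - 1) + ∑ i ∈ G, st.2 i
          < ∑ i ∈ G, st.2 i + ∑ i ∈ F \ G, st.2 i := by linarith
      exact mul_lt_mul_of_pos_left this hbpos
    have hmn : m < n := by
      have : (m : ℚ) < (n : ℚ) := by rw [← hm, ← hn]; exact hqlt
      exact_mod_cast this
    simp only [hf, hf']
    rw [hm, hn, Nat.floor_natCast, Nat.floor_natCast]
    exact hmn


/-- Fix `b > 0`.  Starting from a finite simplicial complex whose
vertices are labelled by elements of `{j/b : j ∈ ℕ}`, there is no infinite sequence of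
monomial blowup moves: the strategy of repeatedly blowing up a minimal face with label
sum `≥ 1` terminates. -/
theorem stmt_14 (b : ℕ) (hb : 0 < b) :
    ¬ ∃ seq : ℕ → Finset (Finset ℕ) × (ℕ → ℚ),
      IsSimplicialComplex (seq 0).1 ∧
      (∀ i : ℕ, ∃ j : ℕ, (seq 0).2 i = (j : ℚ) / (b : ℚ)) ∧
      (∀ t : ℕ, MonomialMove (seq t) (seq (t + 1))) := by
  rintro ⟨seq, h0, hlab0, hmove⟩
  have hgood : ∀ t, GoodSt b (seq t) := by
    intro t
    induction t with
    | zero => exact ⟨h0, fun G _ i _ => hlab0 i⟩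
    | succ t ih => exact (move_step hb ih (hmove t)).1
  have hdec : ∀ t, Relation.TransGen (Relation.CutExpand ((· < ·) : ℕ → ℕ → Prop))
      (gMeasure b (seq (t + 1))) (gMeasure b (seq t)) :=
    fun t => (move_step hb (hgood t) (hmove t)).2
  have wf : WellFounded (Relation.TransGen (Relation.CutExpand ((· < ·) : ℕ → ℕ → Prop))) :=
    (WellFounded.cutExpand (Nat.lt_wfRel.wf)).transGen
  obtain ⟨m, ⟨t, rfl⟩, hmint⟩ :=
    wf.has_min (Set.range fun t => gMeasure b (seq t)) ⟨_, 0, rfl⟩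
  exact hmint _ ⟨t + 1, rfl⟩ (hdec t)
end

section
/- There do not exist polynomials A, B ∈ ℝ[x,y,z] such that A and B have no common zero in ℝ³ and A(p)·(1 − x(p)) = B(p)·y(p) for every point p = (x,y,z) ∈ ℝ³ with x² + y² = 1 and z = 0. Equivalently, the regular map f from the unit circle C = {x²+y²=1, z=0} ⊂ 𝔸³_ℝ to ℙ¹ given by p ↦ (y : 1−x) = (1+x : y) does not extend to a regular map 𝔸³_ℝ → ℙ¹ given by a pair of polynomials without common real zeros. -/
/-!
Parametrize the circle by `t ↦ (cos t, sin t, 0)` and let `a, b` be the values of `A, B` there: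
continuous, `2π`-periodic, and without common zero. Away from `t ∈ 2πℤ` the relation
`a (1 - cos t) = b sin t` says, by the half-angle formulas, that `(a, b)` is parallel to
`(cos (t/2), sin (t/2))`, and by density and continuity this holds everywhere. Hence `(a, b)` is
`E (cos (t/2), sin (t/2))` for the continuous function `E = a cos (t/2) + b sin (t/2)`, which is
`2π`-antiperiodic and so vanishes somewhere by the intermediate value theorem; there `a = b = 0`.
The obstruction is that the Möbius band has no nowhere-vanishing section.
-/

open Real MvPolynomial Set Function

theorem Function.Antiperiodic.exists_eq_zero {f : ℝ → ℝ} {c : ℝ} (hf : Continuous f)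
    (h : Antiperiodic f c) : ∃ t, f t = 0 := by
  have hsign : (0 : ℝ) ∈ uIcc (f 0) (f c) := by
    rw [h.eq, mem_uIcc]
    rcases le_total (f 0) 0 with h0 | h0
    · exact .inl ⟨h0, neg_nonneg.2 h0⟩
    · exact .inr ⟨neg_nonpos.2 h0, h0⟩
  obtain ⟨t, -, ht⟩ := intermediate_value_uIcc hf.continuousOn hsign
  exact ⟨t, ht⟩

theorem dense_setOf_sin_half_ne_zero : Dense {t : ℝ | sin (t / 2) ≠ 0} := by
  refine Set.Countable.dense_compl ℝ ((countable_range fun n : ℤ => 2 * n * π).mono ?_)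
  intro t ht
  obtain ⟨n, hn⟩ := sin_eq_zero_iff.1 ht
  exact ⟨n, by linarith⟩

theorem mul_sin_half_eq_mul_cos_half {a b t : ℝ} (hs : sin (t / 2) ≠ 0)
    (h : a * (1 - cos t) = b * sin t) : a * sin (t / 2) = b * cos (t / 2) := by
  have htwice : 2 * (t / 2) = t := by ring
  have hcos : 1 - cos t = 2 * sin (t / 2) ^ 2 := by
    have hdouble := cos_two_mul (t / 2)
    rw [htwice] at hdouble
    linear_combination -hdouble - 2 * cos_sq_add_sin_sq (t / 2)
  have hsin : sin t = 2 * sin (t / 2) * cos (t / 2) := by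
    rw [← sin_two_mul, htwice]
  rw [hcos, hsin] at h
  have hfactor : sin (t / 2) * (a * sin (t / 2) - b * cos (t / 2)) = 0 := by
    linear_combination h / 2
  exact sub_eq_zero.1 ((mul_eq_zero.1 hfactor).resolve_left hs)

theorem mul_sin_half_eq_mul_cos_half_of_continuous {a b : ℝ → ℝ} (ha : Continuous a)
    (hb : Continuous b) (h : ∀ t, a t * (1 - cos t) = b t * sin t) (t : ℝ) :
    a t * sin (t / 2) = b t * cos (t / 2) := by
  refine congrFun (Continuous.ext_on (f := fun t => a t * sin (t / 2))
    (g := fun t => b t * cos (t / 2)) dense_setOf_sin_half_ne_zero (by fun_prop) (by fun_prop)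
    fun s hs => ?_) t
  exact mul_sin_half_eq_mul_cos_half hs (h s)

theorem exists_eq_zero_and_eq_zero_of_mul_one_sub_cos_eq_mul_sin {a b : ℝ → ℝ}
    (ha : Continuous a) (hb : Continuous b) (ha' : Periodic a (2 * π)) (hb' : Periodic b (2 * π))
    (h : ∀ t, a t * (1 - cos t) = b t * sin t) : ∃ t, a t = 0 ∧ b t = 0 := by
  have hprop := mul_sin_half_eq_mul_cos_half_of_continuous ha hb h
  set E : ℝ → ℝ := fun t => a t * cos (t / 2) + b t * sin (t / 2)
  have hanti : Antiperiodic E (2 * π) := by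
    intro t
    simp only [E, ha' t, hb' t, add_div, mul_div_cancel_left₀ π two_ne_zero, cos_add_pi,
      sin_add_pi]
    ring
  obtain ⟨t, ht⟩ := hanti.exists_eq_zero (by fun_prop)
  have hpyth := sin_sq_add_cos_sq (t / 2)
  exact ⟨t, by linear_combination cos (t / 2) * ht + sin (t / 2) * hprop t - a t * hpyth,
    by linear_combination sin (t / 2) * ht - cos (t / 2) * hprop t - b t * hpyth⟩

noncomputable def circlePoint (t : ℝ) : Fin 3 → ℝ := ![cos t, sin t, 0]

theorem continuous_circlePoint : Continuous circlePoint := by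
  unfold circlePoint; fun_prop

theorem periodic_circlePoint : Periodic circlePoint (2 * π) := by
  intro t; simp [circlePoint]

/-- There are no polynomials `A, B ∈ ℝ[x,y,z]` without a common zero
in `ℝ³` such that `A·(1−x) = B·y` holds at every point of the unit circle
`x² + y² = 1, z = 0`.  Equivalently, the regular map `p ↦ (y : 1−x) = (1+x : y)` from
the circle to `ℙ¹` does not extend to a regular map `𝔸³_ℝ → ℙ¹` given by a pair of
polynomials without common real zeros. -/
theorem stmt_15 :
    ¬ ∃ A B : MvPolynomial (Fin 3) ℝ,
      (∀ p : Fin 3 → ℝ, ¬ (MvPolynomial.eval p A = 0 ∧ MvPolynomial.eval p B = 0)) ∧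
      (∀ p : Fin 3 → ℝ, (p 0) ^ 2 + (p 1) ^ 2 = 1 → p 2 = 0 →
        MvPolynomial.eval p A * (1 - p 0) = MvPolynomial.eval p B * p 1) := by
  rintro ⟨A, B, hnz, heq⟩
  obtain ⟨t, hA, hB⟩ := exists_eq_zero_and_eq_zero_of_mul_one_sub_cos_eq_mul_sin
    ((continuous_eval A).comp continuous_circlePoint)
    ((continuous_eval B).comp continuous_circlePoint)
    (periodic_circlePoint.comp _) (periodic_circlePoint.comp _)
    fun t => heq (circlePoint t) (by simp [circlePoint]) (by simp [circlePoint])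
  exact hnz _ ⟨hA, hB⟩
end
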